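/- arXiv:math/0405321 — 10 statements merged into one kernel-verified Lean document; each statement's English description precedes it below -/
import Mathlib

section
/- Let x₁, x₂, y₁, …, y_i be integers with x₁ ≠ 0 and gcd(x₁, x₂, y₁, …, y_i) = d. Then there exist integers α₁, …, α_i such that gcd(x₁, x₂ + α₁y₁ + ⋯ + α_iy_i) = d. -/
/-! Adding the `yⱼ` one at a time, it suffices that for `a ≠ 0` some `k` gives
`gcd(a, b + k c) = gcd(a, b, c)`. Dividing by `gcd(a, b, c)` reduces this to the coprime case,
where `k` = the product of the primes dividing `a` but not `b` works: a prime dividing both `a`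
and `b + k c` would divide exactly one of `b` and `k c`. -/

theorem Nat.Prime.dvd_prod_filter_primeFactors_iff {n p : ℕ} (hp : p.Prime) (hn : n ≠ 0)
    (P : ℕ → Prop) [DecidablePred P] :
    p ∣ ∏ q ∈ n.primeFactors with P q, q ↔ p ∣ n ∧ P p := by
  rw [hp.prime.dvd_finsetProd_iff]
  constructor
  · rintro ⟨q, hq, hpq⟩
    rw [Finset.mem_filter, Nat.mem_primeFactors] at hq
    rw [(Nat.prime_dvd_prime_iff_eq hp hq.1.1).mp hpq]
    exact ⟨hq.1.2.1, hq.2⟩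
  · rintro ⟨hpn, hPp⟩
    exact ⟨p, Finset.mem_filter.mpr ⟨Nat.mem_primeFactors.mpr ⟨hp, hpn, hn⟩, hPp⟩,
      dvd_rfl⟩

theorem Int.exists_gcd_add_mul_eq_one {a b c : ℤ} (ha : a ≠ 0)
    (habc : Nat.gcd (Int.gcd a b) c.natAbs = 1) : ∃ k : ℤ, Int.gcd a (b + k * c) = 1 := by
  let k : ℕ := ∏ q ∈ a.natAbs.primeFactors with ¬ ((q : ℕ) : ℤ) ∣ b, q
  refine ⟨k, Nat.coprime_of_dvd fun p hp hpa hpbkc => ?_⟩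
  rw [← Int.natCast_dvd] at hpa hpbkc
  have hpk : (p : ℤ) ∣ k ↔ ¬ (p : ℤ) ∣ b := by
    rw [Int.natCast_dvd_natCast, hp.dvd_prod_filter_primeFactors_iff (Int.natAbs_ne_zero.mpr ha),
      ← Int.natCast_dvd, and_iff_right hpa]
  by_cases hpb : (p : ℤ) ∣ b
  · have hpkc : (p : ℤ) ∣ k * c := (dvd_add_right hpb).mp hpbkc
    have hpc : (p : ℤ) ∣ c :=
      ((Nat.prime_iff_prime_int.mp hp).dvd_or_dvd hpkc).resolve_left fun hpk' => hpk.mp hpk' hpb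
    have : p ∣ 1 := habc ▸ Nat.dvd_gcd (Int.dvd_gcd hpa hpb) (Int.natCast_dvd.mp hpc)
    exact hp.one_lt.ne' (Nat.dvd_one.mp this)
  · exact hpb ((dvd_add_left ((hpk.mpr hpb).mul_right c)).mp hpbkc)

theorem Int.exists_gcd_add_mul_eq (b c : ℤ) {a : ℤ} (ha : a ≠ 0) :
    ∃ k : ℤ, Int.gcd a (b + k * c) = Nat.gcd (Int.gcd a b) c.natAbs := by
  generalize hg : Nat.gcd (Int.gcd a b) c.natAbs = g
  have hg0 : g ≠ 0 := by
    rintro rfl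
    exact ha (Int.gcd_eq_zero_iff.mp (Nat.eq_zero_of_gcd_eq_zero_left hg)).1
  have hgab : (g : ℤ) ∣ Int.gcd a b := Int.natCast_dvd_natCast.mpr (hg ▸ Nat.gcd_dvd_left _ _)
  obtain ⟨a', rfl⟩ : (g : ℤ) ∣ a := hgab.trans (Int.gcd_dvd_left _ _)
  obtain ⟨b', rfl⟩ : (g : ℤ) ∣ b := hgab.trans (Int.gcd_dvd_right _ _)
  obtain ⟨c', rfl⟩ : (g : ℤ) ∣ c := Int.natCast_dvd.mpr (hg ▸ Nat.gcd_dvd_right _ _)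
  have hcop : Nat.gcd (Int.gcd a' b') c'.natAbs = 1 := by
    rw [Int.gcd_mul_left, Int.natAbs_mul, Int.natAbs_natCast, Nat.gcd_mul_left] at hg
    exact (Nat.mul_eq_left hg0).mp hg
  obtain ⟨k, hk⟩ := Int.exists_gcd_add_mul_eq_one (right_ne_zero_of_mul ha) hcop
  refine ⟨k, ?_⟩
  rw [show (g : ℤ) * b' + k * (g * c') = g * (b' + k * c') by ring, Int.gcd_mul_left, hk,
    Int.natAbs_natCast, mul_one]

theorem Int.exists_gcd_add_sum_mul_eq {ι : Type*} [DecidableEq ι] (s : Finset ι) (y : ι → ℤ)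
    (b : ℤ) {a : ℤ} (ha : a ≠ 0) :
    ∃ α : ι → ℤ, Int.gcd a (b + ∑ j ∈ s, α j * y j) =
      Nat.gcd (Int.gcd a b) (s.gcd fun j => (y j).natAbs) := by
  induction s using Finset.induction_on with
  | empty => exact ⟨0, by simp⟩
  | @insert j s hj ih =>
    obtain ⟨α, hα⟩ := ih
    obtain ⟨k, hk⟩ := Int.exists_gcd_add_mul_eq (b + ∑ j ∈ s, α j * y j) (y j) ha
    refine ⟨Function.update α j k, ?_⟩
    have hsum : ∑ i ∈ s, Function.update α j k i * y i = ∑ i ∈ s, α i * y i :=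
      Finset.sum_congr rfl fun i hi => by rw [Function.update_of_ne (ne_of_mem_of_not_mem hi hj)]
    rw [Finset.sum_insert hj, Function.update_self, hsum, add_left_comm, add_comm (k * y j), hk,
      hα, Finset.gcd_insert, Nat.gcd_assoc]
    exact congrArg _ (Nat.gcd_comm _ _)

/-- If `gcd(x₁, x₂, y₁, …, yᵢ) = d` with `x₁ ≠ 0`, then there are integers
`α₁, …, αᵢ` with `gcd(x₁, x₂ + α₁ y₁ + ⋯ + αᵢ yᵢ) = d`. -/
theorem gcd_lemma (x₁ x₂ : ℤ) (i : ℕ) (y : Fin i → ℤ) (hx : x₁ ≠ 0) (d : ℕ)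
    (hd : Nat.gcd (Int.gcd x₁ x₂) (Finset.univ.gcd fun j => (y j).natAbs) = d) :
    ∃ α : Fin i → ℤ, Int.gcd x₁ (x₂ + ∑ j, α j * y j) = d :=
  hd ▸ Int.exists_gcd_add_sum_mul_eq Finset.univ y x₂ hx
end

section
/- Fix positive integers d₁, …, d_{g-1} and set δ(j,i) := ∏_{n=j}^{i-1} d_n for j < i. Let 𝕊𝔻 be the set of matrices S in SL(g,ℤ) such that δ(j,i) divides s_{ij} whenever j < i. Then for every S ∈ 𝕊𝔻, the inverse matrix S⁻¹ also lies in 𝕊𝔻; consequently 𝕊𝔻 is a subgroup of SL(g,ℤ). -/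
/-!
With `P k = d₁ ⋯ d_k`, the divisibility conditions on `S` say exactly that the conjugate
`diag(P)⁻¹ S diag(P)` has integer entries. Since `S` and this conjugate have the same determinant
`1`, the inverse of the conjugate is integral as well, and it is the conjugate of `S⁻¹`.
-/

open Finset Matrix

namespace Matrix

variable {n R : Type*} [Fintype n] [DecidableEq n] [CommRing R]

theorem nonsing_inv_mul_eq_mul_nonsing_inv {S D T : Matrix n n R} (hS : IsUnit S.det)
    (hT : IsUnit T.det) (h : S * D = D * T) : S⁻¹ * D = D * T⁻¹ :=
  calc S⁻¹ * D = S⁻¹ * (D * T) * T⁻¹ := by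
        rw [Matrix.mul_assoc, Matrix.mul_assoc, mul_nonsing_inv T hT, Matrix.mul_one]
    _ = D * T⁻¹ := by
        rw [← h, ← Matrix.mul_assoc, nonsing_inv_mul S hS, Matrix.one_mul]

theorem dvd_nonsing_inv_apply_mul [IsDomain R] (P : n → R) (hP : ∀ i, P i ≠ 0)
    {S : Matrix n n R} (hS : IsUnit S.det) (h : ∀ i j, P i ∣ S i j * P j) (i j : n) :
    P i ∣ S⁻¹ i j * P j := by
  choose T hT using h
  have hconj : S * diagonal P = diagonal P * of T := by
    ext i j
    rw [mul_diagonal, diagonal_mul, of_apply, hT]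
  have hdetD : (diagonal P).det ≠ 0 := by
    rw [det_diagonal]
    exact prod_ne_zero_iff.2 fun k _ => hP k
  have hdetT : (of T).det = S.det := by
    have := congrArg det hconj
    rw [det_mul, det_mul, mul_comm] at this
    exact (mul_left_cancel₀ hdetD this).symm
  have hinv := nonsing_inv_mul_eq_mul_nonsing_inv hS (hdetT ▸ hS) hconj
  exact ⟨(of T)⁻¹ i j, by simpa only [mul_diagonal, diagonal_mul] using congrFun₂ hinv i j⟩

end Matrix

section PartialProducts

theorem prod_Ioc_zero_dvd_mul_prod_Ioc_zero {R : Type*} [CommMonoid R] (d : ℕ → R) {i j : ℕ}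
    (hij : i ≤ j) (x : R) : (∏ n ∈ Ioc 0 i, d n) ∣ x * ∏ n ∈ Ioc 0 j, d n := by
  rw [← prod_Ioc_consecutive _ (Nat.zero_le i) hij]
  exact Dvd.dvd.mul_left (dvd_mul_right _ _) x

variable {R : Type*} [CommMonoidWithZero R] [IsCancelMulZero R] [Nontrivial R] (d : ℕ → R)

theorem prod_Ioc_dvd_iff_dvd_mul_prod_Ioc_zero (hd : ∀ n, d n ≠ 0) {j i : ℕ} (hji : j ≤ i)
    (x : R) : (∏ n ∈ Ioc j i, d n) ∣ x ↔ (∏ n ∈ Ioc 0 i, d n) ∣ x * ∏ n ∈ Ioc 0 j, d n := by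
  rw [← prod_Ioc_consecutive _ (Nat.zero_le j) hji, mul_comm x,
    mul_dvd_mul_iff_left (prod_ne_zero_iff.2 fun n _ => hd n)]

theorem forall_prod_Ioc_dvd_iff (hd : ∀ n, d n ≠ 0) {g : ℕ} (S : Matrix (Fin g) (Fin g) R) :
    (∀ i j : Fin g, (j : ℕ) < i → (∏ n ∈ Ioc (j : ℕ) i, d n) ∣ S i j) ↔
      ∀ i j : Fin g, (∏ n ∈ Ioc 0 (i : ℕ), d n) ∣ S i j * ∏ n ∈ Ioc 0 (j : ℕ), d n := by
  refine ⟨fun h i j => ?_, fun h i j hji => ?_⟩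
  · rcases lt_or_ge (j : ℕ) i with hji | hij
    · exact (prod_Ioc_dvd_iff_dvd_mul_prod_Ioc_zero d hd hji.le _).1 (h i j hji)
    · exact prod_Ioc_zero_dvd_mul_prod_Ioc_zero d hij _
  · exact (prod_Ioc_dvd_iff_dvd_mul_prod_Ioc_zero d hd hji.le _).2 (h i j)

end PartialProducts

theorem triangularDiv_inv_general (g : ℕ) (d : ℕ → ℕ) (hd : ∀ n, 0 < d n)
    (S : Matrix (Fin g) (Fin g) ℤ) (hdet : S.det = 1)
    (hS : ∀ i j : Fin g, (j : ℕ) < (i : ℕ) →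
      ((∏ n ∈ Finset.Icc ((j : ℕ) + 1) (i : ℕ), d n : ℕ) : ℤ) ∣ S i j) :
    S⁻¹.det = 1 ∧ S * S⁻¹ = 1 ∧ S⁻¹ * S = 1 ∧
      ∀ i j : Fin g, (j : ℕ) < (i : ℕ) →
        ((∏ n ∈ Finset.Icc ((j : ℕ) + 1) (i : ℕ), d n : ℕ) : ℤ) ∣ S⁻¹ i j := by
  have hU : IsUnit S.det := hdet ▸ isUnit_one
  refine ⟨by rw [det_nonsing_inv, hdet, Ring.inverse_one], mul_nonsing_inv S hU,
    nonsing_inv_mul S hU, ?_⟩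
  have hd' : ∀ n, (d n : ℤ) ≠ 0 := fun n => by exact_mod_cast (hd n).ne'
  simp only [Nat.cast_prod, Icc_add_one_left_eq_Ioc] at hS ⊢
  rw [forall_prod_Ioc_dvd_iff _ hd'] at hS ⊢
  exact dvd_nonsing_inv_apply_mul _ (fun k => prod_ne_zero_iff.2 fun n _ => hd' n) hU hS

/-- If `S ∈ SL(g,ℤ)` satisfies the triangular divisibility condition
`d_{j+1}⋯d_i ∣ S i j` for `j < i`, then so does its inverse; in particular the
set `𝕊𝔻(Δ)` is closed under inversion (and hence a subgroup of `SL(g,ℤ)`). -/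
theorem triangularDiv_inv (g : ℕ) (hg : 1 ≤ g) (d : ℕ → ℕ) (hd : ∀ n, 0 < d n)
    (S : Matrix (Fin g) (Fin g) ℤ) (hdet : S.det = 1)
    (hS : ∀ i j : Fin g, (j : ℕ) < (i : ℕ) →
      ((∏ n ∈ Finset.Icc ((j : ℕ) + 1) (i : ℕ), d n : ℕ) : ℤ) ∣ S i j) :
    S⁻¹.det = 1 ∧ S * S⁻¹ = 1 ∧ S⁻¹ * S = 1 ∧
      ∀ i j : Fin g, (j : ℕ) < (i : ℕ) →
        ((∏ n ∈ Finset.Icc ((j : ℕ) + 1) (i : ℕ), d n : ℕ) : ℤ) ∣ S⁻¹ i j :=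
  triangularDiv_inv_general g d hd S hdet hS
end

section
/- Let e₁=1 and e_{i+1} = e_i·d_i with positive integers d_i, and let v ∈ ℤ^{2g}. Define recursively the divisors D_i(v) := gcd( d_i, gcd_{j=1}^{i} ( gcd(v_j, v_{g+j}) / (D_j(v)·D_{j+1}(v)⋯D_{i-1}(v)) ) ) for i = 1,…,g−1 (so D₁(v) = gcd(d₁, v₁, v_{g+1})). Then the ideal (D_i(v)) ⊆ ℤ equals the ideal ( d_i, (v,Λ) / (D₁(v)⋯D_{i-1}(v)) ), where (v,Λ) = ( e₁v₁, e₂v₂, …, e_g v_g, e₁v_{g+1}, …, e_g v_{2g} ) as an ideal of ℤ. -/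
/-!
Write `G_j = gcd(v_j, v_{g+j})`, `Q_{j,i} = G_j / (D_j ⋯ D_{i-1})` (an exact quotient) and
`c_j = ∏_{n<j} d_n / D_n`, so that `D_i = gcd(d_i, Q_{1,i}, …, Q_{i,i})`. As
`e_j = (D_1 ⋯ D_{j-1}) c_j`, the `j`-th generator of `(v,Λ)/(D_1 ⋯ D_{i-1})` is `c_j Q_{j,i}` for
`j ≤ i` and a multiple of `d_i` for `j > i`, so only the factors `c_j` separate the two sides.
They do not matter: if `t` divides every `c_j Q_{j,i}`, then inductively it divides `Q_{k,i}` for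
`k < j`; as `Q_{k,n} = (D_n ⋯ D_{i-1}) Q_{k,i}`, `t D_n` divides every `Q_{k,n}` for `n < j`, and
then `D_n = gcd(d_n, Q_{1,n}, …, Q_{n,n})` forces `gcd(t, d_n / D_n) = 1`. Hence `t` is coprime
to `c_j` and divides `Q_{j,i}`.
-/

/-- The divisors `D_i(v)` of a vector `v ∈ ℤ^{2g}` (entries indexed `1,…,2g`),
for the polarisation type `(1, d₁, d₁d₂, …, d₁⋯d_{g-1})`:
`D_i = gcd(d_i, gcd_{j=1}^{i} gcd(v_j, v_{g+j}) / (D_j⋯D_{i-1}))`. -/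
def paraD (g : ℕ) (d : ℕ → ℕ) (v : ℕ → ℤ) : ℕ → ℕ
  | i => Nat.gcd (d i) ((Finset.Icc 1 i).attach.gcd fun j =>
      Int.gcd (v j.1) (v (g + j.1)) / ∏ n ∈ (Finset.Ico j.1 i).attach, paraD g d v n.1)
  termination_by i => i
  decreasing_by
    exact (Finset.mem_Ico.mp n.2).2

open Finset

section paraD

variable {g : ℕ} {d : ℕ → ℕ} {v : ℕ → ℤ}

def paraQuot (g : ℕ) (d : ℕ → ℕ) (v : ℕ → ℤ) (j i : ℕ) : ℕ :=
  Int.gcd (v j) (v (g + j)) / ∏ n ∈ Ico j i, paraD g d v n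

theorem paraD_eq_gcd (i : ℕ) :
    paraD g d v i = Nat.gcd (d i) ((Icc 1 i).gcd fun j => paraQuot g d v j i) := by
  rw [paraD]
  congr 1
  conv_rhs => rw [← attach_image_val (s := Icc 1 i), gcd_image]
  exact congrArg _ (funext fun j => congrArg _ (prod_attach _ _))

theorem paraD_pos {i : ℕ} (hi : 0 < d i) : 0 < paraD g d v i := by
  rw [paraD_eq_gcd]
  exact Nat.gcd_pos_of_pos_left _ hi

theorem paraD_dvd (i : ℕ) : paraD g d v i ∣ d i := by
  rw [paraD_eq_gcd]
  exact Nat.gcd_dvd_left _ _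

theorem paraD_dvd_paraQuot {j i : ℕ} (hj : j ∈ Icc 1 i) : paraD g d v i ∣ paraQuot g d v j i := by
  rw [paraD_eq_gcd]
  exact (Nat.gcd_dvd_right _ _).trans (gcd_dvd hj)

theorem prod_paraD_dvd_gcd {j i : ℕ} (hj : 1 ≤ j) (hji : j ≤ i) :
    ∏ n ∈ Ico j i, paraD g d v n ∣ Int.gcd (v j) (v (g + j)) := by
  induction i, hji using Nat.le_induction with
  | base => simp
  | succ i hji ih =>
    rw [prod_Ico_succ_top hji]
    exact Nat.mul_dvd_of_dvd_div ih (paraD_dvd_paraQuot (mem_Icc.mpr ⟨hj, hji⟩))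

theorem prod_paraD_mul_paraQuot {j i : ℕ} (hj : 1 ≤ j) (hji : j ≤ i) :
    (∏ n ∈ Ico j i, paraD g d v n) * paraQuot g d v j i = Int.gcd (v j) (v (g + j)) :=
  Nat.mul_div_cancel' (prod_paraD_dvd_gcd hj hji)

theorem paraQuot_eq_prod_mul {j n i : ℕ} (hj : 1 ≤ j) (hjn : j ≤ n) (hni : n ≤ i) :
    paraQuot g d v j n = (∏ m ∈ Ico n i, paraD g d v m) * paraQuot g d v j i := by
  have hsplit := prod_Ico_consecutive (paraD g d v) hjn hni
  have hdvd : ∏ m ∈ Ico n i, paraD g d v m ∣ paraQuot g d v j n :=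
    Nat.dvd_div_of_mul_dvd (hsplit ▸ prod_paraD_dvd_gcd hj (hjn.trans hni))
  have hquot : paraQuot g d v j i = paraQuot g d v j n / ∏ m ∈ Ico n i, paraD g d v m := by
    rw [paraQuot, paraQuot, ← hsplit, Nat.div_div_eq_div_mul]
  rw [hquot, Nat.mul_div_cancel' hdvd]

theorem coprime_div_paraD_of_mul_dvd {t n : ℕ} (hn : 0 < d n)
    (ht : ∀ j ∈ Icc 1 n, t * paraD g d v n ∣ paraQuot g d v j n) :
    Nat.Coprime t (d n / paraD g d v n) := by
  have hu : Nat.gcd t (d n / paraD g d v n) * paraD g d v n ∣ 1 * paraD g d v n := by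
    rw [one_mul]
    conv_rhs => rw [paraD_eq_gcd]
    refine Nat.dvd_gcd ?_ (dvd_gcd fun j hj => ?_)
    · rw [mul_comm]
      exact Nat.mul_dvd_of_dvd_div (paraD_dvd n) (Nat.gcd_dvd_right _ _)
    · exact (Nat.mul_dvd_mul_right (Nat.gcd_dvd_left _ _) _).trans (ht j hj)
  exact Nat.dvd_one.mp ((Nat.mul_dvd_mul_iff_right (paraD_pos hn)).mp hu)

theorem dvd_paraQuot_of_dvd_mul (hd : ∀ n, 0 < d n) {t i : ℕ}
    (ht : ∀ j ∈ Icc 1 i, t ∣ (∏ n ∈ Ico 1 j, d n / paraD g d v n) * paraQuot g d v j i) :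
    ∀ j ∈ Icc 1 i, t ∣ paraQuot g d v j i := by
  intro j
  induction j using Nat.strong_induction_on with
  | _ j ih =>
    intro hj
    refine Nat.Coprime.dvd_of_dvd_mul_left (Nat.Coprime.prod_right fun n hn => ?_) (ht j hj)
    obtain ⟨-, hnj⟩ := mem_Ico.mp hn
    refine coprime_div_paraD_of_mul_dvd (hd n) fun k hk => ?_
    obtain ⟨hk1, hkn⟩ := mem_Icc.mp hk
    have hni : n < i := hnj.trans_le (mem_Icc.mp hj).2
    rw [paraQuot_eq_prod_mul hk1 hkn hni.le, mul_comm t]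
    exact mul_dvd_mul (dvd_prod_of_mem _ (mem_Ico.mpr ⟨le_rfl, hni⟩))
      (ih k (by omega) (mem_Icc.mpr ⟨hk1, by omega⟩))

theorem prod_d_mul_div_prod_paraD_of_le (hd : ∀ n, 0 < d n) {j i : ℕ} (hj : 1 ≤ j) (hji : j ≤ i) :
    (∏ n ∈ Ico 1 j, d n) * Int.gcd (v j) (v (g + j)) / ∏ n ∈ Ico 1 i, paraD g d v n
      = (∏ n ∈ Ico 1 j, d n / paraD g d v n) * paraQuot g d v j i := by
  have he : ∏ n ∈ Ico 1 j, d n =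
      (∏ n ∈ Ico 1 j, paraD g d v n) * ∏ n ∈ Ico 1 j, d n / paraD g d v n := by
    rw [← prod_mul_distrib]
    exact prod_congr rfl fun n _ => (Nat.mul_div_cancel' (paraD_dvd n)).symm
  rw [he, ← prod_paraD_mul_paraQuot hj hji, mul_mul_mul_comm, prod_Ico_consecutive _ hj hji,
    Nat.mul_div_cancel_left _ (prod_pos fun n _ => paraD_pos (hd n))]

theorem dvd_prod_d_mul_div_prod_paraD_of_lt {j i : ℕ} (hi : 1 ≤ i) (hij : i < j) (x : ℕ) :
    d i ∣ (∏ n ∈ Ico 1 j, d n) * x / ∏ n ∈ Ico 1 i, paraD g d v n := by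
  refine Nat.dvd_div_of_mul_dvd (Dvd.dvd.mul_right ?_ _)
  rw [← prod_Ico_consecutive _ hi hij.le]
  exact mul_dvd_mul (prod_dvd_prod_of_dvd _ _ fun n _ => paraD_dvd n)
    (dvd_prod_of_mem _ (mem_Ico.mpr ⟨le_rfl, hij⟩))

end paraD

theorem paraD_eq_ideal_general (g : ℕ) (d : ℕ → ℕ) (hd : ∀ n, 0 < d n)
    (v : ℕ → ℤ) (i : ℕ) (hi1 : 1 ≤ i) (hi2 : i ≤ g - 1) :
    paraD g d v i =
      Nat.gcd (d i) ((Finset.Icc 1 g).gcd fun j =>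
        ((∏ n ∈ Finset.Icc 1 (j - 1), d n) * Int.gcd (v j) (v (g + j))) /
          ∏ n ∈ Finset.Ico 1 i, paraD g d v n) := by
  have hIcc : ∀ j ∈ Icc 1 g, Icc 1 (j - 1) = Ico 1 j := fun j hj =>
    Icc_sub_one_right_eq_Ico_of_not_isMin
      (by simpa using Nat.one_le_iff_ne_zero.mp (mem_Icc.mp hj).1) 1
  rw [gcd_congr rfl fun j hj => by rw [hIcc j hj]]
  apply Nat.dvd_antisymm
  · refine Nat.dvd_gcd (paraD_dvd i) (dvd_gcd fun j hj => ?_)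
    rcases le_or_gt j i with hji | hij
    · rw [prod_d_mul_div_prod_paraD_of_le hd (mem_Icc.mp hj).1 hji]
      exact (paraD_dvd_paraQuot (mem_Icc.mpr ⟨(mem_Icc.mp hj).1, hji⟩)).mul_left _
    · exact (paraD_dvd i).trans (dvd_prod_d_mul_div_prod_paraD_of_lt hi1 hij _)
  · conv_rhs => rw [paraD_eq_gcd]
    refine Nat.dvd_gcd (Nat.gcd_dvd_left _ _) (dvd_gcd (dvd_paraQuot_of_dvd_mul hd fun j hj => ?_))
    obtain ⟨hj1, hji⟩ := mem_Icc.mp hj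
    rw [← prod_d_mul_div_prod_paraD_of_le hd hj1 hji]
    exact (Nat.gcd_dvd_right _ _).trans (gcd_dvd (mem_Icc.mpr ⟨hj1, by omega⟩))

/-- The ideal `(D_i(v))` equals `(d_i, (v,Λ)/(D₁⋯D_{i-1}))`, where
`(v,Λ) = (e₁v₁,…,e_g v_g, e₁v_{g+1},…, e_g v_{2g})` with `e_j = d₁⋯d_{j-1}`;
stated as an equality of (nonnegative) generators. -/
theorem paraD_eq_ideal (g : ℕ) (hg : 1 ≤ g) (d : ℕ → ℕ) (hd : ∀ n, 0 < d n)
    (v : ℕ → ℤ) (hv : (Finset.Icc 1 (2 * g)).gcd (fun j => (v j).natAbs) = 1)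
    (i : ℕ) (hi1 : 1 ≤ i) (hi2 : i ≤ g - 1) :
    paraD g d v i =
      Nat.gcd (d i) ((Finset.Icc 1 g).gcd fun j =>
        ((∏ n ∈ Finset.Icc 1 (j - 1), d n) * Int.gcd (v j) (v (g + j))) /
          ∏ n ∈ Finset.Ico 1 i, paraD g d v n) :=
  paraD_eq_ideal_general g d hd v i hi1 hi2
end

section
/- With notation as before (divisors D_i(v) of a primitive vector v ∈ ℤ^{2g} with respect to a polarisation type (1, d₁, …, d₁⋯d_{g-1})): the divisors are invariant under the paramodular group, i.e. D_i(vM) = D_i(v) for all M ∈ Γ̃_pol = { M ∈ SL(2g,ℤ) : MΛMᵀ = Λ } and all i = 1,…,g−1. -/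
open Matrix

/-- Reindex a vector `ℤ^g ⊕ ℤ^g` as a one-based sequence of `2g` entries. -/
def ofSum (g : ℕ) (v : (Fin g ⊕ Fin g) → ℤ) : ℕ → ℤ := fun j =>
  if h : 1 ≤ j ∧ j ≤ g then v (Sum.inl ⟨j - 1, by omega⟩)
  else if h2 : g + 1 ≤ j ∧ j ≤ 2 * g then v (Sum.inr ⟨j - g - 1, by omega⟩)
  else 0

/-!
Write `Δ_i = d₁ ⋯ d_i` and `G_j = gcd(v_j, v_{g+j})`. By induction on `i`, the recursion defining
the divisors telescopes to the closed formula
`D₁ ⋯ D_i = gcd(Δ_i, gcd_{j ≤ i} Δ_{j-1} G_j)`.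
The entries of `vΛ` are `±Δ_{j-1} v_{g+j}` and `Δ_{j-1} v_j`, and `Δ_i ∣ Δ_{j-1}` for `j > i`, so
this is `gcd(Δ_i, c(vΛ))`, where `c` is the gcd of the entries of a vector. Finally
`c(vMΛ) = c(vMΛMᵀ) = c(vΛ)` because `Mᵀ` is unimodular.
-/

section Content

variable {n : Type*} [Fintype n]

def content (w : n → ℤ) : ℕ := Finset.univ.gcd fun k => (w k).natAbs

lemma dvd_content_iff {w : n → ℤ} {m : ℕ} : m ∣ content w ↔ ∀ k, (m : ℤ) ∣ w k := by
  simp [content, Finset.dvd_gcd_iff, Int.natCast_dvd]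

lemma content_dvd_content_vecMul (w : n → ℤ) (P : Matrix n n ℤ) :
    content w ∣ content (w ᵥ* P) :=
  dvd_content_iff.2 fun _ => Finset.dvd_sum fun j _ => (dvd_content_iff.1 dvd_rfl j).mul_right _

variable [DecidableEq n]

lemma content_vecMul_of_isUnit_det (w : n → ℤ) {P : Matrix n n ℤ} (hP : IsUnit P.det) :
    content (w ᵥ* P) = content w := by
  refine Nat.dvd_antisymm ?_ (content_dvd_content_vecMul w P)
  simpa [vecMul_vecMul, mul_nonsing_inv P hP] using content_dvd_content_vecMul (w ᵥ* P) P⁻¹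

lemma content_vecMul_vecMul_of_mul_mul_transpose (v : n → ℤ) {M Λ : Matrix n n ℤ}
    (hM : IsUnit M.det) (hMΛ : M * Λ * Mᵀ = Λ) : content (v ᵥ* M ᵥ* Λ) = content (v ᵥ* Λ) := by
  rw [← content_vecMul_of_isUnit_det (v ᵥ* M ᵥ* Λ) (P := Mᵀ) (by rwa [det_transpose]),
    vecMul_vecMul, vecMul_vecMul, ← mul_assoc, hMΛ]

end Content

section Divisors

variable (g : ℕ) (d : ℕ → ℕ) (v : ℕ → ℤ)

def cumProd (i : ℕ) : ℕ := ∏ n ∈ Finset.Icc 1 i, d n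

def pairGcd (j : ℕ) : ℕ := Int.gcd (v j) (v (g + j))

def paraE (i : ℕ) : ℕ :=
  Nat.gcd (cumProd d i) ((Finset.Icc 1 i).gcd fun j => cumProd d (j - 1) * pairGcd g v j)

variable {d}

lemma cumProd_pos (hd : ∀ n, 0 < d n) (i : ℕ) : 0 < cumProd d i :=
  Finset.prod_pos fun n _ => hd n

lemma cumProd_succ (i : ℕ) : cumProd d (i + 1) = cumProd d i * d (i + 1) :=
  Finset.prod_Icc_succ_top (by omega) d

lemma cumProd_dvd_cumProd {i j : ℕ} (h : i ≤ j) : cumProd d i ∣ cumProd d j :=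
  Finset.prod_dvd_prod_of_subset _ _ _ (Finset.Icc_subset_Icc_right h)

lemma paraD_eq (i : ℕ) :
    paraD g d v i = Nat.gcd (d i) ((Finset.Icc 1 i).gcd fun j =>
      pairGcd g v j / ∏ n ∈ Finset.Ico j i, paraD g d v n) := by
  rw [paraD]
  congr 1
  conv_rhs => rw [← Finset.attach_image_val (s := Finset.Icc 1 i), Finset.gcd_image]
  refine Finset.gcd_congr rfl fun j _ => ?_
  rw [Function.comp_apply, pairGcd, ← Finset.prod_attach (Finset.Ico j.1 i)]

lemma paraE_pos (hd : ∀ n, 0 < d n) (i : ℕ) : 0 < paraE g d v i :=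
  Nat.gcd_pos_of_pos_left _ (cumProd_pos hd i)

lemma dvd_paraE_mul_iff {m i : ℕ} (c : ℕ) :
    m ∣ paraE g d v i * c ↔ m ∣ cumProd d i * c ∧
      ∀ j ∈ Finset.Icc 1 i, m ∣ cumProd d (j - 1) * pairGcd g v j * c := by
  rw [paraE, ← Nat.gcd_mul_right, Nat.dvd_gcd_iff, ← normalize_eq c, ← Finset.gcd_mul_right,
    normalize_eq, Finset.dvd_gcd_iff]

lemma dvd_paraE_iff {m i : ℕ} :
    m ∣ paraE g d v i ↔ m ∣ cumProd d i ∧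
      ∀ j ∈ Finset.Icc 1 i, m ∣ cumProd d (j - 1) * pairGcd g v j := by
  simpa using dvd_paraE_mul_iff g v (m := m) (i := i) 1

lemma paraE_dvd_paraE_mul_pairGcd {k l : ℕ} (hl : l ≤ k) :
    paraE g d v k ∣ paraE g d v l * pairGcd g v (l + 1) := by
  rcases hl.eq_or_lt with rfl | hlk
  · exact dvd_mul_right _ _
  have hX := (dvd_paraE_iff g v).1 (dvd_refl (paraE g d v k))
  refine (dvd_paraE_mul_iff g v _).2 ⟨?_, fun j hj => (hX.2 j ?_).mul_right _⟩
  · simpa using hX.2 (l + 1) (by simp; omega)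
  · simp only [Finset.mem_Icc] at hj ⊢; omega

lemma gcd_paraE_mul_eq_paraE_succ (k : ℕ) :
    Nat.gcd (paraE g d v k * d (k + 1))
      ((Finset.Icc 1 (k + 1)).gcd fun j => paraE g d v (j - 1) * pairGcd g v j) =
      paraE g d v (k + 1) := by
  refine Nat.dvd_left_iff_eq.1 fun m => ?_
  rw [Nat.dvd_gcd_iff, Finset.dvd_gcd_iff, dvd_paraE_mul_iff, ← cumProd_succ, dvd_paraE_iff]
  simp only [dvd_paraE_mul_iff]
  constructor
  · rintro ⟨⟨hΔ, -⟩, hX⟩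
    exact ⟨hΔ, fun j hj => (hX j hj).1⟩
  · rintro ⟨hΔ, hX⟩
    refine ⟨⟨hΔ, fun j hj => (hX j ?_).mul_right _⟩,
      fun j hj => ⟨hX j hj, fun l hl => (hX l ?_).mul_right _⟩⟩
    · simp only [Finset.mem_Icc] at hj ⊢; omega
    · simp only [Finset.mem_Icc] at hj hl ⊢; omega

lemma paraE_succ_of_eq_prod (hd : ∀ n, 0 < d n) (k : ℕ)
    (ih : ∀ l ≤ k, paraE g d v l = ∏ n ∈ Finset.Icc 1 l, paraD g d v n) :
    paraE g d v (k + 1) = paraE g d v k * paraD g d v (k + 1) := by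
  have htel : ∀ l ≤ k,
      paraE g d v l * ∏ n ∈ Finset.Ico (l + 1) (k + 1), paraD g d v n = paraE g d v k := by
    intro l hl
    rw [ih l hl, ih k le_rfl, ← Finset.Ico_add_one_right_eq_Icc, ← Finset.Ico_add_one_right_eq_Icc,
      Finset.prod_Ico_consecutive _ (by omega) (by omega)]
  -- By `htel`, multiplying by `paraE k` makes the truncated division in `paraD` exact.
  have hterm : ∀ j ∈ Finset.Icc 1 (k + 1),
      paraE g d v k * (pairGcd g v j / ∏ n ∈ Finset.Ico j (k + 1), paraD g d v n) =
        paraE g d v (j - 1) * pairGcd g v j := by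
    intro j hj
    obtain ⟨l, rfl⟩ : ∃ l, j = l + 1 := ⟨j - 1, by simp only [Finset.mem_Icc] at hj; omega⟩
    have hl : l ≤ k := by simp only [Finset.mem_Icc] at hj; omega
    rw [add_tsub_cancel_right, ← Nat.mul_div_mul_left (pairGcd g v (l + 1)) _ (paraE_pos g v hd l),
      htel l hl, Nat.mul_div_cancel' (paraE_dvd_paraE_mul_pairGcd g v hl)]
  have hmul : ∀ (s : Finset ℕ) (f : ℕ → ℕ) (a : ℕ), a * s.gcd f = s.gcd fun j => a * f j :=
    fun s f a => by rw [Finset.gcd_mul_left, normalize_eq]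
  rw [paraD_eq, ← Nat.gcd_mul_left, hmul, Finset.gcd_congr rfl hterm, gcd_paraE_mul_eq_paraE_succ]

lemma paraE_eq_prod_paraD (hd : ∀ n, 0 < d n) (i : ℕ) :
    paraE g d v i = ∏ n ∈ Finset.Icc 1 i, paraD g d v n := by
  induction i using Nat.strong_induction_on with
  | _ i ih =>
    rcases i with _ | k
    · simp [paraE, cumProd]
    · rw [paraE_succ_of_eq_prod g v hd k fun l hl => ih l (by omega), ih k (by omega),
        Finset.prod_Icc_succ_top (by omega)]

lemma paraE_succ (hd : ∀ n, 0 < d n) (k : ℕ) :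
    paraE g d v (k + 1) = paraE g d v k * paraD g d v (k + 1) := by
  rw [paraE_eq_prod_paraD g v hd, paraE_eq_prod_paraD g v hd, Finset.prod_Icc_succ_top (by omega)]

end Divisors

section ParamodularForm

variable (g : ℕ) (d : ℕ → ℕ)

def paramodularForm : Matrix (Fin g ⊕ Fin g) (Fin g ⊕ Fin g) ℤ :=
  fromBlocks 0 (diagonal fun k : Fin g => (cumProd d k : ℤ))
    (-(diagonal fun k : Fin g => (cumProd d k : ℤ))) 0

variable {g d}

lemma vecMul_paramodularForm_inl (w : Fin g ⊕ Fin g → ℤ) (k : Fin g) :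
    (w ᵥ* paramodularForm g d) (Sum.inl k) = -(cumProd d k * w (Sum.inr k)) := by
  simp [paramodularForm, vecMul_fromBlocks, vecMul_diagonal, mul_comm]

lemma vecMul_paramodularForm_inr (w : Fin g ⊕ Fin g → ℤ) (k : Fin g) :
    (w ᵥ* paramodularForm g d) (Sum.inr k) = cumProd d k * w (Sum.inl k) := by
  simp [paramodularForm, vecMul_fromBlocks, vecMul_diagonal, mul_comm]

lemma dvd_content_vecMul_paramodularForm_iff {w : Fin g ⊕ Fin g → ℤ} {m : ℕ} :
    m ∣ content (w ᵥ* paramodularForm g d) ↔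
      ∀ k : Fin g, m ∣ cumProd d k * Int.gcd (w (Sum.inl k)) (w (Sum.inr k)) := by
  rw [dvd_content_iff, Sum.forall, ← forall_and]
  refine forall_congr' fun k => ?_
  rw [vecMul_paramodularForm_inl, vecMul_paramodularForm_inr, dvd_neg, and_comm,
    ← Int.natAbs_natCast (cumProd d k), ← Int.gcd_mul_left, Int.natAbs_natCast,
    ← Int.natCast_dvd_natCast, Int.dvd_coe_gcd_iff]

lemma pairGcd_ofSum (w : Fin g ⊕ Fin g → ℤ) (k : Fin g) :
    pairGcd g (ofSum g w) (k + 1) = Int.gcd (w (Sum.inl k)) (w (Sum.inr k)) := by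
  simp [pairGcd, ofSum, show g + (k + 1) ≤ 2 * g by omega]

lemma paraE_ofSum (w : Fin g ⊕ Fin g → ℤ) {i : ℕ} (hi : i ≤ g) :
    paraE g d (ofSum g w) i = Nat.gcd (cumProd d i) (content (w ᵥ* paramodularForm g d)) := by
  refine Nat.dvd_left_iff_eq.1 fun m => ?_
  rw [dvd_paraE_iff, Nat.dvd_gcd_iff, dvd_content_vecMul_paramodularForm_iff]
  refine and_congr_right fun hΔ => ⟨fun h k => ?_, fun h j hj => ?_⟩
  · by_cases hk : (k : ℕ) < i
    · simpa [pairGcd_ofSum] using h (k + 1) (by simp only [Finset.mem_Icc]; omega)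
    · exact hΔ.trans ((cumProd_dvd_cumProd (by omega)).mul_right _)
  · obtain ⟨l, rfl⟩ : ∃ l, j = l + 1 := ⟨j - 1, by simp only [Finset.mem_Icc] at hj; omega⟩
    have hl : l < g := by simp only [Finset.mem_Icc] at hj; omega
    have hl' := h ⟨l, hl⟩
    rw [← pairGcd_ofSum] at hl'
    simpa using hl'

end ParamodularForm

theorem paraD_invariant_general (g : ℕ) (d : ℕ → ℕ) (hd : ∀ n, 0 < d n)
    (Δ : Matrix (Fin g) (Fin g) ℤ)
    (hΔ : Δ = Matrix.diagonal fun i : Fin g => ((∏ n ∈ Finset.Icc 1 (i : ℕ), d n : ℕ) : ℤ))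
    (Λ : Matrix (Fin g ⊕ Fin g) (Fin g ⊕ Fin g) ℤ)
    (hΛ : Λ = Matrix.fromBlocks 0 Δ (-Δ) 0)
    (v : (Fin g ⊕ Fin g) → ℤ)
    (M : Matrix (Fin g ⊕ Fin g) (Fin g ⊕ Fin g) ℤ)
    (hdet : M.det = 1) (hM : M * Λ * Mᵀ = Λ)
    (i : ℕ) (hi1 : 1 ≤ i) (hi2 : i ≤ g - 1) :
    paraD g d (ofSum g (Matrix.vecMul v M)) i = paraD g d (ofSum g v) i := by
  have hΛ' : Λ = paramodularForm g d := by rw [hΛ, hΔ]; rfl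
  subst hΛ'
  have hE : ∀ k ≤ g, paraE g d (ofSum g (v ᵥ* M)) k = paraE g d (ofSum g v) k := by
    intro k hk
    rw [paraE_ofSum _ hk, paraE_ofSum _ hk,
      content_vecMul_vecMul_of_mul_mul_transpose v (hdet ▸ isUnit_one) hM]
  obtain ⟨k, rfl⟩ : ∃ k, i = k + 1 := ⟨i - 1, by omega⟩
  have h := paraE_succ g (ofSum g (v ᵥ* M)) hd k
  rw [hE _ (by omega), hE _ (by omega), paraE_succ g _ hd] at h
  exact (Nat.eq_of_mul_eq_mul_left (paraE_pos g _ hd k) h).symm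

/-- The divisors `D_i` are invariant under the paramodular group
`Γ̃_pol = { M ∈ SL(2g,ℤ) : MΛMᵀ = Λ }` acting by right multiplication. -/
theorem paraD_invariant (g : ℕ) (hg : 1 ≤ g) (d : ℕ → ℕ) (hd : ∀ n, 0 < d n)
    (Δ : Matrix (Fin g) (Fin g) ℤ)
    (hΔ : Δ = Matrix.diagonal fun i : Fin g => ((∏ n ∈ Finset.Icc 1 (i : ℕ), d n : ℕ) : ℤ))
    (Λ : Matrix (Fin g ⊕ Fin g) (Fin g ⊕ Fin g) ℤ)
    (hΛ : Λ = Matrix.fromBlocks 0 Δ (-Δ) 0)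
    (v : (Fin g ⊕ Fin g) → ℤ)
    (hv : Finset.univ.gcd (fun a => (v a).natAbs) = 1)
    (M : Matrix (Fin g ⊕ Fin g) (Fin g ⊕ Fin g) ℤ)
    (hdet : M.det = 1) (hM : M * Λ * Mᵀ = Λ)
    (i : ℕ) (hi1 : 1 ≤ i) (hi2 : i ≤ g - 1) :
    paraD g d (ofSum g (Matrix.vecMul v M)) i = paraD g d (ofSum g v) i :=
  paraD_invariant_general g d hd Δ hΔ Λ hΛ v M hdet hM i hi1 hi2
end

section
/- Given any positive integers D₁,…,D_{g-1} with D_i | d_i and gcd(d_i/D_i, D_j) = 1 for all i < j, there exists a primitive vector v ∈ ℤ^{2g} whose divisors are exactly D₁,…,D_{g-1}. In fact v = (D₁⋯D_{g-1}, D₂⋯D_{g-1}, …, D_{g-1}, 1, 0, …, 0) works. -/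
open Finset

theorem Finset.gcd_const {α β : Type*} [CommMonoidWithZero α] [NormalizedGCDMonoid α]
    {s : Finset β} (hs : s.Nonempty) (a : α) : s.gcd (fun _ => a) = normalize a := by
  classical
  rw [gcd_eq_gcd_image, image_const hs, gcd_singleton, id]

theorem Nat.gcd_eq_of_dvd_of_coprime_div {d D b : ℕ} (hD : D ∣ d) (hcop : (d / D).Coprime b) :
    Nat.gcd d (D * b) = D := by
  conv_lhs => rw [← Nat.mul_div_cancel' hD]
  rw [Nat.gcd_mul_left, hcop.gcd_eq_one, mul_one]

theorem paraD_eq_gcd_of_forall_gcd_eq {g : ℕ} {d : ℕ → ℕ} {v : ℕ → ℤ} {i : ℕ} (hi : 1 ≤ i)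
    (Q : ℕ) (hpos : ∀ n ∈ Ico 1 i, 0 < paraD g d v n)
    (hv : ∀ j ∈ Icc 1 i, Int.gcd (v j) (v (g + j)) = (∏ n ∈ Ico j i, paraD g d v n) * Q) :
    paraD g d v i = Nat.gcd (d i) Q := by
  have hterm : ∀ j ∈ (Icc 1 i).attach,
      Int.gcd (v j.1) (v (g + j.1)) / ∏ n ∈ (Ico j.1 i).attach, paraD g d v n.1 = Q := by
    rintro ⟨j, hj⟩ -
    have hj1 : 1 ≤ j := (mem_Icc.mp hj).1
    rw [prod_attach (Ico j i) (paraD g d v), hv j hj]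
    refine Nat.mul_div_cancel_left _ (prod_pos fun n hn => hpos n ?_)
    exact mem_Ico.mpr ⟨hj1.trans (mem_Ico.mp hn).1, (mem_Ico.mp hn).2⟩
  have hne : (Icc 1 i).attach.Nonempty := (nonempty_Icc.mpr hi).attach
  rw [paraD, gcd_congr rfl hterm, Finset.gcd_const hne, normalize_eq]

def tailProdVector (g : ℕ) (D : ℕ → ℕ) : ℕ → ℤ :=
  fun j => if 1 ≤ j ∧ j ≤ g then ((∏ n ∈ Icc j (g - 1), D n : ℕ) : ℤ) else 0

section tailProdVector

variable {g : ℕ} {D : ℕ → ℕ}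

theorem tailProdVector_of_le {j : ℕ} (hj : 1 ≤ j) (hjg : j ≤ g) :
    tailProdVector g D j = ((∏ n ∈ Ico j g, D n : ℕ) : ℤ) := by
  have hIcc : Icc j (g - 1) = Ico j g := by
    ext x
    simp only [mem_Icc, mem_Ico]
    omega
  simp [tailProdVector, hj, hjg, hIcc]

theorem tailProdVector_add_left {j : ℕ} (hj : 1 ≤ j) : tailProdVector g D (g + j) = 0 :=
  if_neg (by omega)

theorem tailProdVector_self (hg : 1 ≤ g) : tailProdVector g D g = 1 := by
  simp [tailProdVector_of_le hg le_rfl]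

theorem gcd_natAbs_tailProdVector (hg : 1 ≤ g) :
    (Icc 1 (2 * g)).gcd (fun j => (tailProdVector g D j).natAbs) = 1 := by
  have hmem : g ∈ Icc 1 (2 * g) := mem_Icc.mpr ⟨hg, by omega⟩
  simpa [tailProdVector_self hg] using gcd_dvd (f := fun j => (tailProdVector g D j).natAbs) hmem

theorem paraD_tailProdVector (d : ℕ → ℕ) (hD0 : ∀ i, 0 < D i)
    (hDd : ∀ i, 1 ≤ i → i ≤ g - 1 → D i ∣ d i)
    (hcop : ∀ i j, 1 ≤ i → i < j → j ≤ g - 1 → Nat.gcd (d i / D i) (D j) = 1) (i : ℕ)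
    (hi : 1 ≤ i) (hig : i ≤ g - 1) : paraD g d (tailProdVector g D) i = D i := by
  induction i using Nat.strong_induction_on with
  | _ i ih =>
    have hprev : ∀ n ∈ Ico 1 i, paraD g d (tailProdVector g D) n = D n := fun n hn =>
      ih n (mem_Ico.mp hn).2 (mem_Ico.mp hn).1 (by have := (mem_Ico.mp hn).2; omega)
    have hgcd : ∀ j ∈ Icc 1 i, Int.gcd (tailProdVector g D j) (tailProdVector g D (g + j)) =
        (∏ n ∈ Ico j i, paraD g d (tailProdVector g D) n) * ∏ n ∈ Ico i g, D n := by
      intro j hj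
      obtain ⟨hj1, hji⟩ := mem_Icc.mp hj
      rw [tailProdVector_of_le hj1 (by omega), tailProdVector_add_left hj1, Int.gcd_zero_right,
        Int.natAbs_natCast, ← prod_Ico_consecutive D hji (by omega)]
      congr 1
      exact prod_congr rfl fun n hn =>
        (hprev n (mem_Ico.mpr ⟨hj1.trans (mem_Ico.mp hn).1, (mem_Ico.mp hn).2⟩)).symm
    rw [paraD_eq_gcd_of_forall_gcd_eq hi _ (fun n hn => hprev n hn ▸ hD0 n) hgcd,
      prod_eq_prod_Ico_succ_bot (by omega)]
    refine Nat.gcd_eq_of_dvd_of_coprime_div (hDd i hi hig) (Nat.Coprime.prod_right fun n hn => ?_)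
    exact hcop i n hi (mem_Ico.mp hn).1 (by have := (mem_Ico.mp hn).2; omega)

end tailProdVector

theorem paraD_realisable_general (g : ℕ) (hg : 1 ≤ g) (d : ℕ → ℕ)
    (D : ℕ → ℕ) (hD0 : ∀ i, 0 < D i)
    (hDd : ∀ i, 1 ≤ i → i ≤ g - 1 → D i ∣ d i)
    (hcop : ∀ i j, 1 ≤ i → i < j → j ≤ g - 1 → Nat.gcd (d i / D i) (D j) = 1) :
    ∃ v : ℕ → ℤ,
      (v = fun j => if 1 ≤ j ∧ j ≤ g then ((∏ n ∈ Finset.Icc j (g - 1), D n : ℕ) : ℤ) else 0) ∧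
      (Finset.Icc 1 (2 * g)).gcd (fun j => (v j).natAbs) = 1 ∧
      ∀ i, 1 ≤ i → i ≤ g - 1 → paraD g d v i = D i :=
  ⟨tailProdVector g D, rfl, gcd_natAbs_tailProdVector hg, paraD_tailProdVector d hD0 hDd hcop⟩

/-- Any admissible set of divisors occurs: given `D_i ∣ d_i` with
`gcd(d_i/D_i, D_j) = 1` for `i < j`, the vector
`v = (D₁⋯D_{g-1}, D₂⋯D_{g-1}, …, D_{g-1}, 1, 0, …, 0)` is primitive and has
divisors exactly `D_i`. -/
theorem paraD_realisable (g : ℕ) (hg : 1 ≤ g) (d : ℕ → ℕ) (hd : ∀ n, 0 < d n)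
    (D : ℕ → ℕ) (hD0 : ∀ i, 0 < D i)
    (hDd : ∀ i, 1 ≤ i → i ≤ g - 1 → D i ∣ d i)
    (hcop : ∀ i j, 1 ≤ i → i < j → j ≤ g - 1 → Nat.gcd (d i / D i) (D j) = 1) :
    ∃ v : ℕ → ℤ,
      (v = fun j => if 1 ≤ j ∧ j ≤ g then ((∏ n ∈ Finset.Icc j (g - 1), D n : ℕ) : ℤ) else 0) ∧
      (Finset.Icc 1 (2 * g)).gcd (fun j => (v j).natAbs) = 1 ∧
      ∀ i, 1 ≤ i → i ≤ g - 1 → paraD g d v i = D i :=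
  paraD_realisable_general g hg d D hD0 hDd hcop
end

section
/- Let M = ((A,B),(C,D)) ∈ SL(2g,ℤ) satisfy MΛMᵀ = Λ, where Λ = ((0,Δ),(−Δ,0)) and Δ = diag(1, d₁, d₁d₂, …, d₁⋯d_{g-1}). Then each of the g×g blocks A, B, C, D satisfies the triangular divisibility condition: for j < i, the product d_j·d_{j+1}⋯d_{i-1} divides the (i,j) entry of the block. -/
/-!
With `Λ = ((0, Δ), (-Δ, 0))`, the relation `M Λ Mᵀ = Λ` for invertible `M` rewrites as
`Λ Mᵀ = M⁻¹ Λ`. Comparing entries, `Δ_j · M_{r c}` is `± Δ_i` times an entry of the integral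
matrix `M⁻¹`, where `i` is the index of the row `r` and `j` that of the column `c`. For `j < i`
we have `Δ_i = Δ_j · d_{j+1} ⋯ d_i`, and cancelling `Δ_j ≠ 0` gives the divisibility.
-/

open Matrix

namespace Matrix

variable {ι R : Type*} [Fintype ι] [DecidableEq ι] [CommRing R]

theorem mul_transpose_eq_nonsing_inv_mul {M Λ : Matrix ι ι R} (hM : IsUnit M.det)
    (h : M * Λ * Mᵀ = Λ) : Λ * Mᵀ = M⁻¹ * Λ := by
  conv_rhs => rw [← h, Matrix.mul_assoc, ← Matrix.mul_assoc, nonsing_inv_mul M hM, Matrix.one_mul]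

theorem dvd_mul_apply_of_mul_fromBlocks_mul_transpose_eq {δ : ι → R}
    {M : Matrix (ι ⊕ ι) (ι ⊕ ι) R} (hM : IsUnit M.det)
    (h : M * fromBlocks 0 (diagonal δ) (-diagonal δ) 0 * Mᵀ =
      fromBlocks 0 (diagonal δ) (-diagonal δ) 0)
    (r c : ι ⊕ ι) : δ (r.elim id id) ∣ δ (c.elim id id) * M r c := by
  have key := congrFun₂ (mul_transpose_eq_nonsing_inv_mul hM h) c.swap r
  rcases r with a | a <;> rcases c with b | b <;>
    simp [mul_apply, Fintype.sum_sum_type, diagonal_apply, neg_eq_iff_eq_neg] at key <;>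
    simp [key]

end Matrix

theorem Finset.prod_Icc_one_eq_mul_prod_Icc {M : Type*} [CommMonoid M] (f : ℕ → M) {j i : ℕ}
    (hji : j ≤ i) : ∏ n ∈ Icc 1 i, f n = (∏ n ∈ Icc 1 j, f n) * ∏ n ∈ Icc (j + 1) i, f n := by
  rw [Icc_add_one_left_eq_Ioc]
  exact (prod_Ioc_consecutive f (Nat.zero_le j) hji).symm

theorem paramodular_blocks_triangular_general (g : ℕ) (d : ℕ → ℕ)
    (hd : ∀ n, 0 < d n)
    (Δ : Matrix (Fin g) (Fin g) ℤ)
    (hΔ : Δ = Matrix.diagonal fun i : Fin g => ((∏ n ∈ Finset.Icc 1 (i : ℕ), d n : ℕ) : ℤ))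
    (Λ : Matrix (Fin g ⊕ Fin g) (Fin g ⊕ Fin g) ℤ)
    (hΛ : Λ = Matrix.fromBlocks 0 Δ (-Δ) 0)
    (M : Matrix (Fin g ⊕ Fin g) (Fin g ⊕ Fin g) ℤ)
    (hdet : M.det = 1) (hM : M * Λ * Mᵀ = Λ) :
    ∀ i j : Fin g, (j : ℕ) < (i : ℕ) →
      (((∏ n ∈ Finset.Icc ((j : ℕ) + 1) (i : ℕ), d n : ℕ) : ℤ) ∣ M (Sum.inl i) (Sum.inl j)) ∧
      (((∏ n ∈ Finset.Icc ((j : ℕ) + 1) (i : ℕ), d n : ℕ) : ℤ) ∣ M (Sum.inl i) (Sum.inr j)) ∧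
      (((∏ n ∈ Finset.Icc ((j : ℕ) + 1) (i : ℕ), d n : ℕ) : ℤ) ∣ M (Sum.inr i) (Sum.inl j)) ∧
      (((∏ n ∈ Finset.Icc ((j : ℕ) + 1) (i : ℕ), d n : ℕ) : ℤ) ∣ M (Sum.inr i) (Sum.inr j)) := by
  subst hΛ hΔ
  intro i j hji
  have hj : ((∏ n ∈ Finset.Icc 1 (j : ℕ), d n : ℕ) : ℤ) ≠ 0 :=
    Int.natCast_ne_zero.mpr (Finset.prod_pos fun n _ => hd n).ne'
  have hdiv (r c : Fin g ⊕ Fin g) (hr : r.elim id id = i) (hc : c.elim id id = j) :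
      ((∏ n ∈ Finset.Icc ((j : ℕ) + 1) (i : ℕ), d n : ℕ) : ℤ) ∣ M r c := by
    have h := dvd_mul_apply_of_mul_fromBlocks_mul_transpose_eq
      (by rw [hdet]; exact isUnit_one) hM r c
    rw [hr, hc, Finset.prod_Icc_one_eq_mul_prod_Icc _ hji.le, Nat.cast_mul] at h
    exact (mul_dvd_mul_iff_left hj).mp h
  exact ⟨hdiv _ _ rfl rfl, hdiv _ _ rfl rfl, hdiv _ _ rfl rfl, hdiv _ _ rfl rfl⟩

/-- Each block `A, B, C, D` of a paramodular matrix `M = ((A,B),(C,D))`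
satisfies the triangular divisibility condition: for `j < i`,
`d_{j+1}⋯d_i` divides the `(i,j)` entry (one-based `d_{j+1}⋯d_{i-1}` for
indices `i+1 > j+1`). -/
theorem paramodular_blocks_triangular (g : ℕ) (hg : 1 ≤ g) (d : ℕ → ℕ)
    (hd : ∀ n, 0 < d n)
    (Δ : Matrix (Fin g) (Fin g) ℤ)
    (hΔ : Δ = Matrix.diagonal fun i : Fin g => ((∏ n ∈ Finset.Icc 1 (i : ℕ), d n : ℕ) : ℤ))
    (Λ : Matrix (Fin g ⊕ Fin g) (Fin g ⊕ Fin g) ℤ)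
    (hΛ : Λ = Matrix.fromBlocks 0 Δ (-Δ) 0)
    (M : Matrix (Fin g ⊕ Fin g) (Fin g ⊕ Fin g) ℤ)
    (hdet : M.det = 1) (hM : M * Λ * Mᵀ = Λ) :
    ∀ i j : Fin g, (j : ℕ) < (i : ℕ) →
      (((∏ n ∈ Finset.Icc ((j : ℕ) + 1) (i : ℕ), d n : ℕ) : ℤ) ∣ M (Sum.inl i) (Sum.inl j)) ∧
      (((∏ n ∈ Finset.Icc ((j : ℕ) + 1) (i : ℕ), d n : ℕ) : ℤ) ∣ M (Sum.inl i) (Sum.inr j)) ∧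
      (((∏ n ∈ Finset.Icc ((j : ℕ) + 1) (i : ℕ), d n : ℕ) : ℤ) ∣ M (Sum.inr i) (Sum.inl j)) ∧
      (((∏ n ∈ Finset.Icc ((j : ℕ) + 1) (i : ℕ), d n : ℕ) : ℤ) ∣ M (Sum.inr i) (Sum.inr j)) :=
  paramodular_blocks_triangular_general g d hd Δ hΔ Λ hΛ M hdet hM
end

section
/- Let Γ̃_pol^lev = { M ∈ Γ̃_pol : M acts as the identity on Λ^∨/Λ }, where Λ = ℤ^{2g} with the paramodular form and Λ^∨ its dual lattice. Then M ∈ Γ̃_pol lies in Γ̃_pol^lev if and only if for every i = 1,…,g, the number d₁⋯d_{i-1} divides every entry of the i-th row and of the (g+i)-th row of M − 𝟙. -/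
/-!
Pairing with the standard basis of `ℤ^{2g}` shows that `y ∈ Λ^∨` exactly when every
coordinate `y_w` times the corresponding elementary divisor `q_w` is an integer. Since
`y (M - 𝟙) = ∑_w (q_w y_w) · (M - 𝟙)_w / q_w`, divisibility of the rows of `M - 𝟙` makes
it integral, and testing on the basis vectors `q_w⁻¹ e_w` of `Λ^∨` gives the converse.
-/

open Matrix

theorem forall_intCast_dotProduct_integral_iff {ι : Type*} [Fintype ι] [DecidableEq ι]
    (v : ι → ℚ) :
    (∀ l : ι → ℤ, ∃ z : ℤ, (fun a => (l a : ℚ)) ⬝ᵥ v = z) ↔ ∀ a, ∃ z : ℤ, v a = z := by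
  refine ⟨fun h a => ?_, fun h l => ?_⟩
  · obtain ⟨z, hz⟩ := h (Pi.single a 1)
    refine ⟨z, ?_⟩
    rw [← hz, dotProduct_comm]
    simp [dotProduct, Pi.single_apply]
  · choose z hz using h
    exact ⟨∑ a, l a * z a, by simp [dotProduct, hz]⟩

theorem paramodular_mulVec_integral_iff {m : Type*} [Fintype m] [DecidableEq m] (p : m → ℤ)
    (y : m ⊕ m → ℚ) :
    (∀ a, ∃ z : ℤ,
        ((fromBlocks 0 (diagonal p) (-diagonal p) 0).map (Int.cast : ℤ → ℚ) *ᵥ y) a = z) ↔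
      ∀ w, ∃ z : ℤ, ((Sum.elim p p w : ℤ) : ℚ) * y w = z := by
  have neg_integral (x : ℚ) : (∃ z : ℤ, -x = z) ↔ ∃ z : ℤ, x = z :=
    ⟨fun ⟨z, hz⟩ => ⟨-z, by push_cast; linarith⟩, fun ⟨z, hz⟩ => ⟨-z, by push_cast; linarith⟩⟩
  simp only [fromBlocks_map, fromBlocks_mulVec, Sum.forall, Sum.elim_inl, Sum.elim_inr,
    Pi.add_apply]
  simp [mulVec_diagonal, neg_integral, and_comm]

theorem vecMul_integral_on_dual_iff_dvd {ι κ : Type*} [Fintype ι] [DecidableEq ι] (q : ι → ℤ)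
    (hq : ∀ w, q w ≠ 0) (N : Matrix ι κ ℤ) :
    (∀ y : ι → ℚ, (∀ w, ∃ z : ℤ, (q w : ℚ) * y w = z) →
        ∀ a, ∃ z : ℤ, (y ᵥ* N.map (Int.cast : ℤ → ℚ)) a = z) ↔
      ∀ w a, q w ∣ N w a := by
  refine ⟨fun h w a => ?_, fun h y hy a => ?_⟩
  · have hqw : (q w : ℚ) ≠ 0 := Int.cast_ne_zero.2 (hq w)
    have hdual : ∀ v, ∃ z : ℤ, (q v : ℚ) * (Pi.single w (q w : ℚ)⁻¹ : ι → ℚ) v = z := fun v =>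
      ⟨(Pi.single w 1 : ι → ℤ) v, by by_cases hv : v = w <;> simp [hv, hqw]⟩
    obtain ⟨z, hz⟩ := h _ hdual a
    rw [single_vecMul] at hz
    refine ⟨z, ?_⟩
    have : (N w a : ℚ) = q w * z := by
      rw [← hz]; simp [field]
    exact_mod_cast this
  · choose k hk using h
    choose m hm using hy
    refine ⟨∑ w, m w * k w a, ?_⟩
    simp only [vecMul, dotProduct, map_apply, hk, Int.cast_mul, Int.cast_sum, ← hm]
    exact Finset.sum_congr rfl fun w _ => by ring

theorem level_structure_characterisation_general (g : ℕ) (d : ℕ → ℕ)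
    (hd : ∀ n, 0 < d n)
    (Δ : Matrix (Fin g) (Fin g) ℤ)
    (hΔ : Δ = Matrix.diagonal fun i : Fin g => ((∏ n ∈ Finset.Icc 1 (i : ℕ), d n : ℕ) : ℤ))
    (Λ : Matrix (Fin g ⊕ Fin g) (Fin g ⊕ Fin g) ℤ)
    (hΛ : Λ = Matrix.fromBlocks 0 Δ (-Δ) 0)
    (M : Matrix (Fin g ⊕ Fin g) (Fin g ⊕ Fin g) ℤ) :
    (∀ y : (Fin g ⊕ Fin g) → ℚ,
        (∀ l : (Fin g ⊕ Fin g) → ℤ,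
          ∃ z : ℤ, (fun a => ((l a : ℚ))) ⬝ᵥ (Λ.map (Int.cast : ℤ → ℚ)).mulVec y = (z : ℚ)) →
        ∀ a : Fin g ⊕ Fin g,
          ∃ z : ℤ, Matrix.vecMul y (M.map (Int.cast : ℤ → ℚ)) a - y a = (z : ℚ)) ↔
    (∀ i : Fin g, ∀ b : Fin g ⊕ Fin g,
        (((∏ n ∈ Finset.Icc 1 (i : ℕ), d n : ℕ) : ℤ) ∣ (M - 1) (Sum.inl i) b) ∧
        (((∏ n ∈ Finset.Icc 1 (i : ℕ), d n : ℕ) : ℤ) ∣ (M - 1) (Sum.inr i) b)) := by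
  subst hΔ hΛ
  set p : Fin g → ℤ := fun i => ((∏ n ∈ Finset.Icc 1 (i : ℕ), d n : ℕ) : ℤ)
  have hp : ∀ w, Sum.elim p p w ≠ 0 := by
    rintro (i | i) <;>
      exact Nat.cast_ne_zero.2 (Finset.prod_ne_zero_iff.2 fun n _ => (hd n).ne')
  have hsub (y : Fin g ⊕ Fin g → ℚ) (a : Fin g ⊕ Fin g) :
      (y ᵥ* M.map Int.cast) a - y a = (y ᵥ* (M - 1).map Int.cast) a := by
    rw [Matrix.map_sub _ Int.cast_sub, Matrix.map_one _ Int.cast_zero Int.cast_one, vecMul_sub,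
      vecMul_one, Pi.sub_apply]
  simp_rw [forall_intCast_dotProduct_integral_iff, paramodular_mulVec_integral_iff, hsub]
  rw [vecMul_integral_on_dual_iff_dvd _ hp, Sum.forall]
  simp only [Sum.elim_inl, Sum.elim_inr, p, forall_and]

/-- A paramodular matrix `M` induces the identity on `L^∨/L` if and only if
`d₁⋯d_{i-1}` divides every entry of the `i`-th and `(g+i)`-th rows of
`M − 𝟙`. -/
theorem level_structure_characterisation (g : ℕ) (hg : 1 ≤ g) (d : ℕ → ℕ)
    (hd : ∀ n, 0 < d n)
    (Δ : Matrix (Fin g) (Fin g) ℤ)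
    (hΔ : Δ = Matrix.diagonal fun i : Fin g => ((∏ n ∈ Finset.Icc 1 (i : ℕ), d n : ℕ) : ℤ))
    (Λ : Matrix (Fin g ⊕ Fin g) (Fin g ⊕ Fin g) ℤ)
    (hΛ : Λ = Matrix.fromBlocks 0 Δ (-Δ) 0)
    (M : Matrix (Fin g ⊕ Fin g) (Fin g ⊕ Fin g) ℤ)
    (hdet : M.det = 1) (hM : M * Λ * Mᵀ = Λ) :
    (∀ y : (Fin g ⊕ Fin g) → ℚ,
        (∀ l : (Fin g ⊕ Fin g) → ℤ,
          ∃ z : ℤ, (fun a => ((l a : ℚ))) ⬝ᵥ (Λ.map (Int.cast : ℤ → ℚ)).mulVec y = (z : ℚ)) →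
        ∀ a : Fin g ⊕ Fin g,
          ∃ z : ℤ, Matrix.vecMul y (M.map (Int.cast : ℤ → ℚ)) a - y a = (z : ℚ)) ↔
    (∀ i : Fin g, ∀ b : Fin g ⊕ Fin g,
        (((∏ n ∈ Finset.Icc 1 (i : ℕ), d n : ℕ) : ℤ) ∣ (M - 1) (Sum.inl i) b) ∧
        (((∏ n ∈ Finset.Icc 1 (i : ℕ), d n : ℕ) : ℤ) ∣ (M - 1) (Sum.inr i) b)) :=
  level_structure_characterisation_general g d hd Δ hΔ Λ hΛ M
end

section
/- Every matrix in the conjugated paramodular group with level structure has integer entries: Γ_pol^lev := R⁻¹ Γ̃_pol^lev R ⊆ Sp(2g,ℤ), where R = ((𝟙,0),(0,Δ)). -/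
/-!
Write `R = diag(1, Δ)` and `J = ((0,𝟙),(-𝟙,0))`, so that `Λ = R J Rᵀ`. The entry of `R⁻¹ M R` at
`(a, b)` is `M a b · w b / w a` for the weight vector `w = (1, e)`; the level structure makes the row
`a` of `M - 1` divisible by `w a`, which off the diagonal is divisibility of `M a b`, so every entry
is an integer. Conjugating `M Λ Mᵀ = Λ = R J Rᵀ` by `R⁻¹` gives `N J Nᵀ = J` for `N = R⁻¹ M R`.
-/

open Matrix

section Conjugation

variable {ι : Type*} [DecidableEq ι]

theorem dvd_mul_of_dvd_sub_one {w : ι → ℤ} {M : Matrix ι ι ℤ}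
    (h : ∀ a b, w a ∣ (M - 1) a b) (a b : ι) : w a ∣ M a b * w b := by
  by_cases hab : a = b
  · subst hab
    exact dvd_mul_left _ _
  · have hM : (M - 1) a b = M a b := by simp [one_apply_ne hab]
    exact (hM ▸ h a b).mul_right _

theorem exists_intCast_eq_diagonal_inv_mul_mul_diagonal [Fintype ι] {K : Type*} [Field K]
    [CharZero K] {w : ι → ℤ} (hw : ∀ a, w a ≠ 0) {M : Matrix ι ι ℤ} (h : ∀ a b, w a ∣ M a b * w b)
    (a b : ι) :
    ∃ z : ℤ, (diagonal (fun i => (w i : K)⁻¹) * M.map (Int.cast : ℤ → K) *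
      diagonal (fun i => (w i : K))) a b = z := by
  obtain ⟨z, hz⟩ := h a b
  refine ⟨z, ?_⟩
  have hzK : (M a b : K) * w b = w a * z := by exact_mod_cast congrArg (Int.cast : ℤ → K) hz
  rw [mul_diagonal, diagonal_mul, map_apply, mul_assoc, hzK,
    inv_mul_cancel_left₀ (Int.cast_ne_zero.mpr (hw a))]

theorem mul_mul_transpose_conj_eq [Fintype ι] {α : Type*} [CommRing α]
    {A R Rinv J : Matrix ι ι α}
    (hinv : Rinv * R = 1) (hA : A * (R * J * Rᵀ) * Aᵀ = R * J * Rᵀ) :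
    Rinv * A * R * J * (Rinv * A * R)ᵀ = J :=
  calc Rinv * A * R * J * (Rinv * A * R)ᵀ = Rinv * (A * (R * J * Rᵀ) * Aᵀ) * Rinvᵀ := by
        simp only [transpose_mul, Matrix.mul_assoc]
    _ = Rinv * R * J * (Rinv * R)ᵀ := by
        rw [hA]
        simp only [transpose_mul, Matrix.mul_assoc]
    _ = J := by rw [hinv, transpose_one, Matrix.one_mul, Matrix.mul_one]

end Conjugation

theorem fromBlocks_one_mul_mul_transpose {m α : Type*} [Fintype m] [DecidableEq m] [CommRing α]
    (D : Matrix m m α) :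
    fromBlocks 1 0 0 D * fromBlocks 0 1 (-1) 0 * (fromBlocks 1 0 0 D)ᵀ =
      fromBlocks 0 Dᵀ (-D) 0 := by
  simp [fromBlocks_transpose, fromBlocks_multiply]

theorem level_structure_subset_Sp_general (g : ℕ) (d : ℕ → ℕ)
    (hd : ∀ n, 0 < d n)
    (e : Fin g → ℕ) (he : e = fun i : Fin g => ∏ n ∈ Finset.Icc 1 (i : ℕ), d n)
    (Δ : Matrix (Fin g) (Fin g) ℤ)
    (hΔ : Δ = Matrix.diagonal fun i : Fin g => ((e i : ℕ) : ℤ))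
    (Λ : Matrix (Fin g ⊕ Fin g) (Fin g ⊕ Fin g) ℤ)
    (hΛ : Λ = Matrix.fromBlocks 0 Δ (-Δ) 0)
    (M : Matrix (Fin g ⊕ Fin g) (Fin g ⊕ Fin g) ℤ)
    (hM : M * Λ * Mᵀ = Λ)
    (hlev : ∀ i : Fin g, ∀ b : Fin g ⊕ Fin g,
        (((e i : ℕ) : ℤ) ∣ (M - 1) (Sum.inl i) b) ∧
        (((e i : ℕ) : ℤ) ∣ (M - 1) (Sum.inr i) b))
    (R Rinv : Matrix (Fin g ⊕ Fin g) (Fin g ⊕ Fin g) ℚ)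
    (hR : R = Matrix.fromBlocks 1 0 0 (Matrix.diagonal fun i : Fin g => ((e i : ℚ))))
    (hRinv : Rinv = Matrix.fromBlocks 1 0 0 (Matrix.diagonal fun i : Fin g => ((e i : ℚ))⁻¹))
    (N : Matrix (Fin g ⊕ Fin g) (Fin g ⊕ Fin g) ℚ)
    (hN : N = Rinv * M.map (Int.cast : ℤ → ℚ) * R) :
    (∀ a b : Fin g ⊕ Fin g, ∃ z : ℤ, N a b = (z : ℚ)) ∧
      N * Matrix.fromBlocks 0 1 (-1) 0 * Nᵀ = Matrix.fromBlocks 0 1 (-1) 0 := by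
  have he0 (i : Fin g) : e i ≠ 0 := by
    rw [he]
    exact Finset.prod_ne_zero_iff.mpr fun n _ => (hd n).ne'
  set w : Fin g ⊕ Fin g → ℤ := Sum.elim 1 fun i => (e i : ℤ)
  have hw (a) : w a ≠ 0 := by rcases a with i | i <;> simp [w, he0]
  constructor
  · have hRd : R = diagonal fun a => (w a : ℚ) := by
      rw [hR, ← diagonal_one, fromBlocks_diagonal]
      congr; ext (i | i) <;> simp [w]
    have hRinvd : Rinv = diagonal fun a => (w a : ℚ)⁻¹ := by
      rw [hRinv, ← diagonal_one, fromBlocks_diagonal]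
      congr; ext (i | i) <;> simp [w]
    have hrow (a b) : w a ∣ (M - 1) a b := by
      rcases a with i | i
      · exact one_dvd _
      · exact (hlev i b).2
    rw [hN, hRd, hRinvd]
    exact exists_intCast_eq_diagonal_inv_mul_mul_diagonal hw (dvd_mul_of_dvd_sub_one hrow)
  · have hinv : Rinv * R = 1 := by
      rw [hRinv, hR, fromBlocks_multiply]
      simp [diagonal_mul_diagonal, he0, ← diagonal_one, fromBlocks_diagonal]
    have hΛR : Λ.map (Int.cast : ℤ → ℚ) = R * fromBlocks 0 1 (-1) 0 * Rᵀ := by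
      rw [hR, fromBlocks_one_mul_mul_transpose, hΛ, hΔ, fromBlocks_map, diagonal_transpose]
      simp [diagonal_map]
    have hMΛ : (M * Λ * Mᵀ).map (Int.castRingHom ℚ) = Λ.map (Int.castRingHom ℚ) := by rw [hM]
    rw [Matrix.map_mul, Matrix.map_mul, transpose_map, Int.coe_castRingHom, hΛR] at hMΛ
    rw [hN]
    exact mul_mul_transpose_conj_eq hinv hMΛ

/-- The conjugated paramodular group with canonical level structure is
contained in `Sp(2g,ℤ)`: for `M ∈ Γ̃_pol^lev`, the matrix `R⁻¹MR` with
`R = ((𝟙,0),(0,Δ))` has integer entries and is symplectic. -/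
theorem level_structure_subset_Sp (g : ℕ) (hg : 1 ≤ g) (d : ℕ → ℕ)
    (hd : ∀ n, 0 < d n)
    (e : Fin g → ℕ) (he : e = fun i : Fin g => ∏ n ∈ Finset.Icc 1 (i : ℕ), d n)
    (Δ : Matrix (Fin g) (Fin g) ℤ)
    (hΔ : Δ = Matrix.diagonal fun i : Fin g => ((e i : ℕ) : ℤ))
    (Λ : Matrix (Fin g ⊕ Fin g) (Fin g ⊕ Fin g) ℤ)
    (hΛ : Λ = Matrix.fromBlocks 0 Δ (-Δ) 0)
    (M : Matrix (Fin g ⊕ Fin g) (Fin g ⊕ Fin g) ℤ)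
    (hdet : M.det = 1) (hM : M * Λ * Mᵀ = Λ)
    (hlev : ∀ i : Fin g, ∀ b : Fin g ⊕ Fin g,
        (((e i : ℕ) : ℤ) ∣ (M - 1) (Sum.inl i) b) ∧
        (((e i : ℕ) : ℤ) ∣ (M - 1) (Sum.inr i) b))
    (R Rinv : Matrix (Fin g ⊕ Fin g) (Fin g ⊕ Fin g) ℚ)
    (hR : R = Matrix.fromBlocks 1 0 0 (Matrix.diagonal fun i : Fin g => ((e i : ℚ))))
    (hRinv : Rinv = Matrix.fromBlocks 1 0 0 (Matrix.diagonal fun i : Fin g => ((e i : ℚ))⁻¹))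
    (N : Matrix (Fin g ⊕ Fin g) (Fin g ⊕ Fin g) ℚ)
    (hN : N = Rinv * M.map (Int.cast : ℤ → ℚ) * R) :
    (∀ a b : Fin g ⊕ Fin g, ∃ z : ℤ, N a b = (z : ℚ)) ∧
      N * Matrix.fromBlocks 0 1 (-1) 0 * Nᵀ = Matrix.fromBlocks 0 1 (-1) 0 :=
  level_structure_subset_Sp_general g d hd e he Δ hΔ Λ hΛ M hM hlev R Rinv hR hRinv N hN
end

section
/- Two primitive vectors v, w ∈ ℤ^{2g} are in the same orbit under the paramodular group Γ̃_pol if and only if v̂_i = ŵ_i for all i = 1,…,g, where v̂_i := gcd over j ≤ i of gcd(v_j, v_{g+j}) together with the numbers (d_i⋯d_{j-1})·gcd(v_j, v_{g+j}) for j > i. In particular, if w = vM with M ∈ Γ̃_pol, then v̂_j divides ŵ_j for all j. -/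
/-!
Write `v = (x, y)` and `Λ = [[0, Δ], [-Δ, 0]]` with `Δ = diag(e_0, …, e_{g-1})`, `e_k = d_1⋯d_k`.
For `M` in the group, `Λ Mᵀ = M⁻¹ Λ`; comparing entries gives `e_r ∣ e_c M_rc`, where a row or
column index stands for the pair it belongs to. These congruences make each `v̂_i` divide the
corresponding invariant of `vM`, so the `v̂_i` are orbit invariants.

Conversely, elementary transvections on one pair `(x_k, y_k)` run the Euclidean algorithm, so every
vector is equivalent to some `(z, 0)` with `z ∈ ℕ^g`. For `k < l` the transvection by
`E_kl + (e_l/e_k) E_lk`, followed by two pair reductions, replaces `(z_k, z_l)` by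
`(gcd(z_k, z_l e_l/e_k), gcd(z_l, z_k))`. Taking `z` minimal for pointwise divisibility therefore
forces `z_l ∣ z_k ∣ z_l e_l/e_k` for all `k < l`, and then `z_k = v̂_{k+1}`: the invariants
determine the orbit.
-/

open Matrix

/-- `v̂_i = gcd(gcd(v₁,v_{g+1}), …, gcd(v_i,v_{g+i}),
d_i·gcd(v_{i+1},v_{g+i+1}), …, (d_i⋯d_{g-1})·gcd(v_g,v_{2g}))`. -/
def vhat (g : ℕ) (d : ℕ → ℕ) (v : ℕ → ℤ) (i : ℕ) : ℕ :=
  (Finset.Icc 1 g).gcd fun j =>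
    if j ≤ i then Int.gcd (v j) (v (g + j))
    else (∏ n ∈ Finset.Icc i (j - 1), d n) * Int.gcd (v j) (v (g + j))

open Finset Relation

namespace Paramodular

section Orbit

variable {n R : Type*} [Fintype n] [DecidableEq n] [CommRing R]

def SameOrbit (Λ : Matrix n n R) (v w : n → R) : Prop :=
  ∃ M : Matrix n n R, M.det = 1 ∧ M * Λ * Mᵀ = Λ ∧ v ᵥ* M = w

variable {Λ : Matrix n n R}

theorem SameOrbit.refl (v : n → R) : SameOrbit Λ v v := ⟨1, by simp⟩

theorem SameOrbit.trans {u v w : n → R} (huv : SameOrbit Λ u v) (hvw : SameOrbit Λ v w) :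
    SameOrbit Λ u w := by
  obtain ⟨M, hMdet, hMΛ, rfl⟩ := huv
  obtain ⟨N, hNdet, hNΛ, rfl⟩ := hvw
  refine ⟨M * N, by rw [det_mul, hMdet, hNdet, one_mul], ?_, (vecMul_vecMul _ _ _).symm⟩
  calc M * N * Λ * (M * N)ᵀ = M * (N * Λ * Nᵀ) * Mᵀ := by
        simp only [transpose_mul, Matrix.mul_assoc]
    _ = Λ := by rw [hNΛ, hMΛ]

theorem mul_transpose_eq_inv_mul {M : Matrix n n R} (hM : IsUnit M.det) (hMΛ : M * Λ * Mᵀ = Λ) :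
    Λ * Mᵀ = M⁻¹ * Λ := by
  calc Λ * Mᵀ = M⁻¹ * (M * Λ * Mᵀ) := by
        rw [← Matrix.mul_assoc, ← Matrix.mul_assoc, nonsing_inv_mul _ hM, Matrix.one_mul]
    _ = M⁻¹ * Λ := by rw [hMΛ]

theorem SameOrbit.symm {v w : n → R} (h : SameOrbit Λ v w) : SameOrbit Λ w v := by
  obtain ⟨M, hMdet, hMΛ, rfl⟩ := h
  have hM : IsUnit M.det := hMdet ▸ isUnit_one
  refine ⟨M⁻¹, by rw [det_nonsing_inv, hMdet, Ring.inverse_one], ?_, ?_⟩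
  · rw [← mul_transpose_eq_inv_mul hM hMΛ, Matrix.mul_assoc, ← transpose_mul,
      nonsing_inv_mul _ hM, transpose_one, Matrix.mul_one]
  · rw [vecMul_vecMul, mul_nonsing_inv _ hM, vecMul_one]

end Orbit

section BlockForm

variable {m R : Type*} [Fintype m] [DecidableEq m] [CommRing R]

abbrev altForm (Δ : Matrix m m R) : Matrix (m ⊕ m) (m ⊕ m) R := fromBlocks 0 Δ (-Δ) 0

theorem sameOrbit_upper {Δ S : Matrix m m R} (hS : Δ * Sᵀ = S * Δ) (x y : m → R) :
    SameOrbit (altForm Δ) (Sum.elim x y) (Sum.elim x (y + x ᵥ* S)) := by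
  refine ⟨fromBlocks 1 S 0 1, by simp, ?_, ?_⟩
  · simp [fromBlocks_transpose, fromBlocks_multiply, hS]
  · simp [vecMul_fromBlocks, add_comm]

theorem sameOrbit_lower {Δ T : Matrix m m R} (hT : T * Δ = Δ * Tᵀ) (x y : m → R) :
    SameOrbit (altForm Δ) (Sum.elim x y) (Sum.elim (x + y ᵥ* T) y) := by
  refine ⟨fromBlocks 1 0 T 1, by simp, ?_, ?_⟩
  · simp [fromBlocks_transpose, fromBlocks_multiply, hT]
  · simp [vecMul_fromBlocks]

theorem dvd_mul_apply_of_mul_mul_transpose_eq {e : m → R} {M : Matrix (m ⊕ m) (m ⊕ m) R}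
    (hM : IsUnit M.det) (hMΛ : M * altForm (diagonal e) * Mᵀ = altForm (diagonal e))
    (r c : m ⊕ m) : e (Sum.elim id id r) ∣ e (Sum.elim id id c) * M r c := by
  -- entry `(c.swap, r)` of `Λ Mᵀ = M⁻¹ Λ` reads `± e_c M_rc = ± (M⁻¹)_{c.swap, r.swap} e_r`
  have h := congrFun (congrFun (mul_transpose_eq_inv_mul hM hMΛ) c.swap) r
  rcases r with j | j <;> rcases c with i | i <;>
    simp only [altForm, Sum.swap_inl, Sum.swap_inr, Matrix.mul_apply, transpose_apply,
      Fintype.sum_sum_type, fromBlocks_apply₁₁, fromBlocks_apply₁₂, fromBlocks_apply₂₁,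
      fromBlocks_apply₂₂, Matrix.neg_apply, Matrix.zero_apply, diagonal_apply, mul_ite, ite_mul,
      mul_zero, zero_mul, neg_mul, mul_neg, sum_neg_distrib, sum_ite_eq, sum_ite_eq', mem_univ,
      if_true, sum_const_zero, add_zero, zero_add, neg_inj, Sum.elim_inl, Sum.elim_inr, id_eq] at h ⊢
  all_goals first
    | exact h ▸ dvd_mul_left _ _
    | exact h ▸ (dvd_mul_left _ _).neg_right
    | exact dvd_neg.1 (h ▸ dvd_mul_left _ _)

end BlockForm

section PartialProducts

variable {d : ℕ → ℕ}

def dprod (d : ℕ → ℕ) (a b : ℕ) : ℕ := ∏ n ∈ Ioc a b, d n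

theorem dprod_of_le {a b : ℕ} (h : b ≤ a) : dprod d a b = 1 := by
  simp [dprod, Ioc_eq_empty_of_le h]

theorem dprod_mul_dprod {a b c : ℕ} (hab : a ≤ b) (hbc : b ≤ c) :
    dprod d a b * dprod d b c = dprod d a c :=
  prod_Ioc_consecutive _ hab hbc

theorem dprod_mul_dprod_eq_max {a b : ℕ} (c : ℕ) (hab : a ≤ b) :
    dprod d a b * dprod d b c = dprod d a (max b c) := by
  rcases le_total c b with hcb | hbc
  · rw [dprod_of_le hcb, mul_one, max_eq_left hcb]
  · rw [dprod_mul_dprod hab hbc, max_eq_right hbc]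

theorem dprod_dvd_dprod (a : ℕ) {b c : ℕ} (hbc : b ≤ c) : dprod d a b ∣ dprod d a c := by
  rcases le_total a b with hab | hba
  · exact Dvd.intro _ (dprod_mul_dprod hab hbc)
  · rw [dprod_of_le hba]; exact one_dvd _

theorem dprod_pos (hd : ∀ n, 0 < d n) (a b : ℕ) : 0 < dprod d a b :=
  prod_pos fun n _ => hd n

theorem dprod_dvd_of_dvd (hd : ∀ n, 0 < d n) {j k l : ℕ} {X : ℤ}
    (h : (dprod d 0 k : ℤ) ∣ dprod d 0 l * X) : (dprod d j k : ℤ) ∣ dprod d j l * X := by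
  have hmax : (dprod d 0 (max j k) : ℤ) ∣ dprod d 0 (max j l) * X := by
    rcases le_total k j with hkj | hjk
    · rw [max_eq_left hkj]
      exact dvd_mul_of_dvd_left (Int.natCast_dvd_natCast.2 (dprod_dvd_dprod 0 (le_max_left _ _))) _
    · rw [max_eq_right hjk]
      exact h.trans
        (mul_dvd_mul_right (Int.natCast_dvd_natCast.2 (dprod_dvd_dprod 0 (le_max_right _ _))) _)
  have hj : (dprod d 0 j : ℤ) ≠ 0 := by exact_mod_cast (dprod_pos hd 0 j).ne'
  rw [← dprod_mul_dprod_eq_max k (Nat.zero_le j), ← dprod_mul_dprod_eq_max l (Nat.zero_le j),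
    Nat.cast_mul, Nat.cast_mul, mul_assoc] at hmax
  exact (mul_dvd_mul_iff_left hj).1 hmax

end PartialProducts

section Invariant

variable {g : ℕ} (d : ℕ → ℕ)

abbrev paraForm (g : ℕ) : Matrix (Fin g ⊕ Fin g) (Fin g ⊕ Fin g) ℤ :=
  altForm (diagonal fun k : Fin g => (dprod d 0 k : ℤ))

/-- The paper's `v̂_{j+1}`: indices of pairs and invariants are zero-based here. -/
def orbitInv (u : Fin g ⊕ Fin g → ℤ) (j : ℕ) : ℕ :=
  univ.gcd fun k : Fin g => dprod d j k * Int.gcd (u (.inl k)) (u (.inr k))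

variable {d}

theorem dvd_orbitInv_iff {u : Fin g ⊕ Fin g → ℤ} {j n : ℕ} :
    n ∣ orbitInv d u j ↔ ∀ a, (n : ℤ) ∣ dprod d j (Sum.elim id id a : Fin g) * u a := by
  simp only [orbitInv, Finset.dvd_gcd_iff, mem_univ, true_implies, Sum.forall,
    Sum.elim_inl, Sum.elim_inr, id, ← forall_and]
  refine forall_congr' fun k => ?_
  rw [← Int.natAbs_natCast (dprod d j k), ← Int.gcd_mul_left, Int.dvd_gcd_iff, Int.natAbs_natCast]

theorem orbitInv_dvd_vecMul (hd : ∀ n, 0 < d n) {M : Matrix (Fin g ⊕ Fin g) (Fin g ⊕ Fin g) ℤ}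
    (hMdet : M.det = 1) (hMΛ : M * paraForm d g * Mᵀ = paraForm d g)
    (u : Fin g ⊕ Fin g → ℤ) (j : ℕ) : orbitInv d u j ∣ orbitInv d (u ᵥ* M) j := by
  refine dvd_orbitInv_iff.2 fun a => ?_
  rw [vecMul, dotProduct, mul_sum]
  refine dvd_sum fun b _ => ?_
  have hu := dvd_orbitInv_iff.1 (dvd_refl (orbitInv d u j)) b
  obtain ⟨z, hz⟩ := dprod_dvd_of_dvd hd (j := j)
    (dvd_mul_apply_of_mul_mul_transpose_eq (hMdet ▸ isUnit_one) hMΛ b a)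
  exact hu.trans ⟨z, by rw [mul_left_comm, hz]; ring⟩

theorem SameOrbit.orbitInv_eq (hd : ∀ n, 0 < d n) {v w : Fin g ⊕ Fin g → ℤ}
    (h : SameOrbit (paraForm d g) v w) (j : ℕ) : orbitInv d v j = orbitInv d w j := by
  obtain ⟨M, hMdet, hMΛ, rfl⟩ := h
  obtain ⟨N, hNdet, hNΛ, hN⟩ := SameOrbit.symm ⟨M, hMdet, hMΛ, rfl⟩
  refine Nat.dvd_antisymm (orbitInv_dvd_vecMul hd hMdet hMΛ v j) ?_
  have := orbitInv_dvd_vecMul hd hNdet hNΛ (v ᵥ* M) j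
  rwa [hN] at this

end Invariant

section PairMoves

variable {m R : Type*} [Fintype m] [DecidableEq m] [CommRing R]

theorem vecMul_single (x : m → R) (i j : m) (c : R) :
    x ᵥ* single i j c = Pi.single j (x i * c) := by
  ext l
  by_cases h : l = j
  · subst h; simp [vecMul, dotProduct, single_apply]
  · simp [vecMul, dotProduct, h, Ne.symm h]

theorem diagonal_mul_single (e : m → R) (i j : m) (c : R) :
    diagonal e * single i j c = single i j (e i * c) := by
  ext a b
  by_cases h : i = a ∧ j = b
  · obtain ⟨rfl, rfl⟩ := h; simp
  · simp [h]

theorem single_mul_diagonal (e : m → R) (i j : m) (c : R) :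
    single i j c * diagonal e = single i j (c * e j) := by
  ext a b
  by_cases h : i = a ∧ j = b
  · obtain ⟨rfl, rfl⟩ := h; simp
  · simp [h]

omit [Fintype m] in
theorem add_single_eq_update (y : m → R) (k : m) (c : R) :
    y + Pi.single k c = Function.update y k (y k + c) := by
  ext j
  by_cases h : j = k <;> simp [h]

def PairStep (p q : R × R) : Prop :=
  ∃ t : R, q = (p.1 + p.2 * t, p.2) ∨ q = (p.1, p.2 + p.1 * t)

theorem sameOrbit_of_pairStep (e : m → R) {x y : m → R} {k : m} {q : R × R}
    (h : PairStep (x k, y k) q) :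
    SameOrbit (altForm (diagonal e)) (Sum.elim x y)
      (Sum.elim (Function.update x k q.1) (Function.update y k q.2)) := by
  obtain ⟨t, hq⟩ := h
  have hS : diagonal e * (single k k t)ᵀ = single k k t * diagonal e := by
    rw [transpose_single, diagonal_mul_single, single_mul_diagonal, mul_comm]
  rcases hq with rfl | rfl
  · have := sameOrbit_lower hS.symm x y
    rw [vecMul_single, add_single_eq_update] at this
    simpa only [Function.update_eq_self] using this
  · have := sameOrbit_upper hS x y
    rw [vecMul_single, add_single_eq_update] at this
    simpa only [Function.update_eq_self] using this

theorem sameOrbit_of_pairReach (e : m → R) {x y : m → R} {k : m} {p : R × R}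
    (h : ReflTransGen PairStep (x k, y k) p) :
    SameOrbit (altForm (diagonal e)) (Sum.elim x y)
      (Sum.elim (Function.update x k p.1) (Function.update y k p.2)) := by
  induction h with
  | refl => simpa using SameOrbit.refl _
  | @tail b c _ hstep ih =>
    have hb : ((Function.update x k b.1) k, (Function.update y k b.2) k) = b := by simp
    have := ih.trans (sameOrbit_of_pairStep e (hb ▸ hstep))
    simpa only [Function.update_idem] using this

end PairMoves

section Euclid

variable {R : Type*} [CommRing R]

theorem pairReach_rotate (a b : R) : ReflTransGen PairStep (a, b) (b, -a) := by
  have h₁ : PairStep (a, b) (a, b - a) := ⟨-1, Or.inr (by simp [sub_eq_add_neg])⟩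
  have h₂ : PairStep (a, b - a) (b, b - a) := ⟨1, Or.inl (by simp)⟩
  have h₃ : PairStep (b, b - a) (b, -a) := ⟨-1, Or.inr (Prod.ext rfl (by dsimp only; ring))⟩
  exact .tail (.tail (.single h₁) h₂) h₃

theorem pairReach_neg (a b : R) : ReflTransGen PairStep (a, b) (-a, -b) :=
  (pairReach_rotate a b).trans (pairReach_rotate b (-a))

theorem pairReach_gcd (a b : ℤ) : ReflTransGen PairStep (a, b) (Int.gcd a b, 0) := by
  induction hn : b.natAbs using Nat.strong_induction_on generalizing a b with
  | _ n ih =>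
  obtain rfl | hb := eq_or_ne b 0
  · rcases le_or_gt 0 a with ha | ha
    · simpa [Int.natAbs_of_nonneg ha] using ReflTransGen.refl
    · simpa [Int.ofNat_natAbs_of_nonpos ha.le] using pairReach_neg a 0
  · have hmod : PairStep (a, b) (a % b, b) :=
      ⟨-(a / b), Or.inl (Prod.ext (by dsimp only; rw [Int.emod_def]; ring) rfl)⟩
    have hlt : (-(a % b)).natAbs < n := by
      have := Int.emod_lt a hb; have := Int.emod_nonneg a hb; omega
    have := ih _ hlt b (-(a % b)) rfl
    rw [Int.gcd_neg, Int.gcd_comm, Int.gcd_emod] at this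
    exact (ReflTransGen.single hmod).trans ((pairReach_rotate _ _).trans this)

end Euclid

section GcdMoves

variable {m : Type*} [Fintype m] [DecidableEq m] (e : m → ℤ)

def inlVec (z : m → ℕ) : m ⊕ m → ℤ := Sum.elim (fun k => (z k : ℤ)) 0

def gcdSwap (z : m → ℕ) (k l : m) (q : ℕ) : m → ℕ :=
  Function.update (Function.update z k (Nat.gcd (z k) (z l * q))) l (Nat.gcd (z l) (z k))

theorem sameOrbit_gcd_pair (x y : m → ℤ) (k : m) :
    SameOrbit (altForm (diagonal e)) (Sum.elim x y)
      (Sum.elim (Function.update x k (Int.gcd (x k) (y k))) (Function.update y k 0)) :=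
  sameOrbit_of_pairReach e (pairReach_gcd _ _)

theorem sameOrbit_inlVec_gcd (u : m ⊕ m → ℤ) :
    SameOrbit (altForm (diagonal e)) u (inlVec fun k => Int.gcd (u (.inl k)) (u (.inr k))) := by
  obtain ⟨x, y, rfl⟩ : ∃ x y, u = Sum.elim x y :=
    ⟨u ∘ .inl, u ∘ .inr, (Sum.elim_comp_inl_inr u).symm⟩
  suffices h : ∀ s : Finset m, SameOrbit (altForm (diagonal e))
      (Sum.elim x y) (Sum.elim (fun k => if k ∈ s then (Int.gcd (x k) (y k) : ℤ) else x k)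
        (fun k => if k ∈ s then 0 else y k)) by
    simpa [inlVec, Pi.zero_def] using h univ
  intro s
  induction s using Finset.induction_on with
  | empty => simpa using SameOrbit.refl _
  | insert a s ha ih =>
    refine ih.trans ?_
    convert sameOrbit_gcd_pair e _ _ a using 2 <;> funext k <;> by_cases hk : k = a <;>
      simp [hk, ha]

theorem sameOrbit_inlVec_gcdSwap {k l : m} (hkl : k ≠ l) {q : ℕ} (hq : e k * q = e l)
    (z : m → ℕ) :
    SameOrbit (altForm (diagonal e)) (inlVec z) (inlVec (gcdSwap z k l q)) := by
  set S : Matrix m m ℤ := single k l 1 + single l k (q : ℤ)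
  have hS : diagonal e * Sᵀ = S * diagonal e := by
    simp only [S, transpose_add, transpose_single, Matrix.mul_add, Matrix.add_mul,
      diagonal_mul_single, single_mul_diagonal, ← hq]
    rw [add_comm]; congr 2 <;> ring
  let x : m → ℤ := fun i => z i
  let y : m → ℤ := Pi.single l (x k) + Pi.single k (x l * q)
  show SameOrbit _ (Sum.elim x 0) (Sum.elim (fun i => (gcdSwap z k l q i : ℤ)) 0)
  have h₁ : SameOrbit (altForm (diagonal e)) (Sum.elim x 0) (Sum.elim x y) := by
    simpa [S, y, vecMul_add, vecMul_single] using sameOrbit_upper hS x 0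
  refine h₁.trans ((sameOrbit_gcd_pair e x y k).trans ?_)
  convert sameOrbit_gcd_pair e _ _ l using 2 <;> funext j <;> by_cases hjl : j = l
  · simp [gcdSwap, x, y, hjl, hkl, Ne.symm hkl, ← Int.gcd_natCast_natCast]
  · by_cases hjk : j = k <;>
      simp [gcdSwap, x, y, hjl, hjk, hkl, Ne.symm hkl, ← Int.gcd_natCast_natCast]
  · simp [hjl]
  · by_cases hjk : j = k <;> simp [y, hjl, hjk, hkl]

end GcdMoves

section ReducedForm

variable {g : ℕ} {d : ℕ → ℕ}

def IsReduced (d : ℕ → ℕ) (z : Fin g → ℕ) : Prop :=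
  ∀ k l : Fin g, k ≤ l → z l ∣ z k ∧ z k ∣ z l * dprod d k l

theorem orbitInv_inlVec_of_isReduced {z : Fin g → ℕ} (hz : IsReduced d z) (j : Fin g) :
    orbitInv d (inlVec z) j = z j := by
  refine Nat.dvd_antisymm ?_ (dvd_orbitInv_iff.2 ?_)
  · have := dvd_orbitInv_iff.1 (dvd_refl (orbitInv d (inlVec z) j)) (.inl j)
    exact Int.natCast_dvd_natCast.1 (by simpa [inlVec, dprod_of_le le_rfl] using this)
  · rintro (k | k)
    · rcases le_total k j with hkj | hjk
      · simpa [inlVec, dprod_of_le (Fin.le_iff_val_le_val.1 hkj)] using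
          Int.natCast_dvd_natCast.2 (hz k j hkj).1
      · simpa [inlVec, mul_comm] using Int.natCast_dvd_natCast.2 (hz j k hjk).2
    · simp [inlVec]

theorem mk_gcdSwap_lt {z : Fin g → ℕ} {k l : Fin g} (hkl : k ≠ l) {q : ℕ}
    (hz : ¬(z l ∣ z k ∧ z k ∣ z l * q)) :
    Associates.mk ∘ gcdSwap z k l q < Associates.mk ∘ z := by
  refine lt_of_le_of_ne (fun i => Associates.mk_le_mk_iff_dvd.2 ?_) fun h => hz ?_
  · by_cases hil : i = l
    · simp [gcdSwap, hil, Nat.gcd_dvd_left]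
    · by_cases hik : i = k <;> simp [gcdSwap, hil, hik, hkl, Nat.gcd_dvd_left]
  · have hk := Associates.mk_injective (congrFun h k)
    have hl := Associates.mk_injective (congrFun h l)
    simp only [gcdSwap, Function.update_self, Function.update_of_ne hkl] at hk hl
    exact ⟨hl ▸ Nat.gcd_dvd_right _ _, hk ▸ Nat.gcd_dvd_right _ _⟩

theorem exists_isReduced (u : Fin g ⊕ Fin g → ℤ) :
    ∃ z : Fin g → ℕ, IsReduced d z ∧ SameOrbit (paraForm d g) u (inlVec z) := by
  have : WellFoundedLT (Associates ℕ) := WfDvdMonoid.wellFoundedLT_associates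
  obtain ⟨z, hz, hmin⟩ := (InvImage.wf (Associates.mk ∘ ·) wellFounded_lt).has_min
    {z | SameOrbit (paraForm d g) u (inlVec z)} ⟨_, sameOrbit_inlVec_gcd _ u⟩
  refine ⟨z, fun k l hkl => ?_, hz⟩
  by_contra hbad
  have hlt : k < l := lt_of_le_of_ne hkl (by rintro rfl; simp [dprod_of_le] at hbad)
  have hq : (dprod d 0 k : ℤ) * dprod d k l = dprod d 0 l := by
    exact_mod_cast dprod_mul_dprod (Nat.zero_le _) (Fin.le_iff_val_le_val.1 hkl)
  exact hmin _ (hz.trans (sameOrbit_inlVec_gcdSwap _ hlt.ne hq z)) (mk_gcdSwap_lt hlt.ne hbad)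

end ReducedForm

section Indexing

variable {g : ℕ}

theorem dprod_zero (d : ℕ → ℕ) (k : ℕ) : dprod d 0 k = ∏ n ∈ Icc 1 k, d n := by
  rw [dprod, ← Icc_add_one_left_eq_Ioc, zero_add]

theorem ofSum_inl (v : Fin g ⊕ Fin g → ℤ) (k : Fin g) : ofSum g v (k + 1) = v (.inl k) := by
  simp [ofSum]

theorem ofSum_inr (v : Fin g ⊕ Fin g → ℤ) (k : Fin g) :
    ofSum g v (g + (k + 1)) = v (.inr k) := by
  simp [ofSum, show ¬2 * g < g + (k + 1) by omega]

theorem Icc_one_eq_image : Icc 1 g = univ.image fun k : Fin g => (k : ℕ) + 1 := by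
  ext j
  simp only [mem_Icc, mem_image, mem_univ, true_and]
  refine ⟨fun h => ⟨⟨j - 1, by omega⟩, Nat.sub_add_cancel h.1⟩, ?_⟩
  rintro ⟨k, rfl⟩
  omega

theorem vhat_ofSum (d : ℕ → ℕ) (v : Fin g ⊕ Fin g → ℤ) {i : ℕ} (hi : 1 ≤ i) :
    vhat g d (ofSum g v) i = orbitInv d v (i - 1) := by
  rw [vhat, Icc_one_eq_image, gcd_image, orbitInv]
  refine gcd_congr rfl fun k _ => ?_
  simp only [Function.comp_apply, ofSum_inl, ofSum_inr, Nat.add_sub_cancel]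
  split_ifs with hk
  · rw [dprod_of_le (by omega), one_mul]
  · rw [dprod, ← Icc_add_one_left_eq_Ioc, Nat.sub_add_cancel hi]

end Indexing

end Paramodular

open Paramodular

theorem orbits_paramodular_general (g : ℕ) (d : ℕ → ℕ) (hd : ∀ n, 0 < d n)
    (Δ : Matrix (Fin g) (Fin g) ℤ)
    (hΔ : Δ = Matrix.diagonal fun i : Fin g => ((∏ n ∈ Finset.Icc 1 (i : ℕ), d n : ℕ) : ℤ))
    (Λ : Matrix (Fin g ⊕ Fin g) (Fin g ⊕ Fin g) ℤ)
    (hΛ : Λ = Matrix.fromBlocks 0 Δ (-Δ) 0)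
    (v w : (Fin g ⊕ Fin g) → ℤ) :
    ((∃ M : Matrix (Fin g ⊕ Fin g) (Fin g ⊕ Fin g) ℤ,
        M.det = 1 ∧ M * Λ * Mᵀ = Λ ∧ Matrix.vecMul v M = w) ↔
      (∀ i, 1 ≤ i → i ≤ g → vhat g d (ofSum g v) i = vhat g d (ofSum g w) i)) ∧
    (∀ M : Matrix (Fin g ⊕ Fin g) (Fin g ⊕ Fin g) ℤ,
        M.det = 1 → M * Λ * Mᵀ = Λ → Matrix.vecMul v M = w →
        ∀ j, 1 ≤ j → j ≤ g → vhat g d (ofSum g v) j ∣ vhat g d (ofSum g w) j) := by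
  have hΛ' : Λ = paraForm d g := by simp only [hΛ, hΔ, paraForm, altForm, dprod_zero]
  subst hΛ'
  refine ⟨⟨fun h i hi _ => ?_, fun h => ?_⟩, fun M hMdet hMΛ hMvw j hj _ => ?_⟩
  · rw [vhat_ofSum d v hi, vhat_ofSum d w hi]
    exact SameOrbit.orbitInv_eq hd h (i - 1)
  · obtain ⟨z, hz, hvz⟩ := exists_isReduced (d := d) v
    obtain ⟨z', hz', hwz⟩ := exists_isReduced (d := d) w
    have hzz' : z = z' := funext fun k => by
      have := h (k + 1) (by omega) k.isLt
      rwa [vhat_ofSum d v (by omega), vhat_ofSum d w (by omega), Nat.add_sub_cancel,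
        hvz.orbitInv_eq hd, hwz.orbitInv_eq hd, orbitInv_inlVec_of_isReduced hz,
        orbitInv_inlVec_of_isReduced hz'] at this
    subst hzz'
    exact hvz.trans hwz.symm
  · rw [vhat_ofSum d v hj, vhat_ofSum d w hj, ← hMvw]
    exact orbitInv_dvd_vecMul hd hMdet hMΛ v (j - 1)

/-- Two primitive vectors are in the same `Γ̃_pol`-orbit iff `v̂_i = ŵ_i`
for all `i = 1, …, g`; in particular, if `w = vM` with `M ∈ Γ̃_pol` then
`v̂_j ∣ ŵ_j` for all `j`. -/
theorem orbits_paramodular (g : ℕ) (hg : 1 ≤ g) (d : ℕ → ℕ) (hd : ∀ n, 0 < d n)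
    (Δ : Matrix (Fin g) (Fin g) ℤ)
    (hΔ : Δ = Matrix.diagonal fun i : Fin g => ((∏ n ∈ Finset.Icc 1 (i : ℕ), d n : ℕ) : ℤ))
    (Λ : Matrix (Fin g ⊕ Fin g) (Fin g ⊕ Fin g) ℤ)
    (hΛ : Λ = Matrix.fromBlocks 0 Δ (-Δ) 0)
    (v w : (Fin g ⊕ Fin g) → ℤ)
    (hv : Finset.univ.gcd (fun a => (v a).natAbs) = 1)
    (hw : Finset.univ.gcd (fun a => (w a).natAbs) = 1) :
    ((∃ M : Matrix (Fin g ⊕ Fin g) (Fin g ⊕ Fin g) ℤ,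
        M.det = 1 ∧ M * Λ * Mᵀ = Λ ∧ Matrix.vecMul v M = w) ↔
      (∀ i, 1 ≤ i → i ≤ g → vhat g d (ofSum g v) i = vhat g d (ofSum g w) i)) ∧
    (∀ M : Matrix (Fin g ⊕ Fin g) (Fin g ⊕ Fin g) ℤ,
        M.det = 1 → M * Λ * Mᵀ = Λ → Matrix.vecMul v M = w →
        ∀ j, 1 ≤ j → j ≤ g → vhat g d (ofSum g v) j ∣ vhat g d (ofSum g w) j) :=
  orbits_paramodular_general g d hd Δ hΔ Λ hΛ v w
end

section
/- Let d₁,…,d_{g-1} be pairwise coprime positive integers (coprime polarisation type), let v¹,…,vⁿ ∈ ℤ^{2g}, and let A be a unimodular n×n integer matrix with uⁱ := Σ_l a_{il} v^l. Then for every 1 ≤ k ≤ g−1, gcd(D_k(u¹),…,D_k(uⁿ)) = gcd(D_k(v¹),…,D_k(vⁿ)). -/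
/-!
For a coprime polarisation type the recursive correction factors in `D_k` are coprime to `d_k`,
so `D_k(w) = gcd(d_k, w_j, w_{g+j} : 1 ≤ j ≤ k)`. Hence a number divides
`gcd_i D_k(uⁱ)` iff it divides `d_k` and the entries `uⁱ_j, uⁱ_{g+j}` (`j ≤ k`) of every `uⁱ`.
Since `u = A v` and `v = A⁻¹ u` with `A⁻¹` integral, the entries of each family are integer
combinations of those of the other, so both gcds have the same divisors.
-/

open scoped Matrix

namespace paraD

variable {g : ℕ} {d : ℕ → ℕ} {v : ℕ → ℤ} {c i k : ℕ}

theorem dvd_iff :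
    c ∣ paraD g d v i ↔ c ∣ d i ∧ ∀ j ∈ Finset.Icc 1 i,
      c ∣ Int.gcd (v j) (v (g + j)) / ∏ m ∈ Finset.Ico j i, paraD g d v m := by
  rw [paraD, Nat.dvd_gcd_iff, Finset.dvd_gcd_iff]
  simp [Finset.prod_attach]

theorem dvd_d : paraD g d v i ∣ d i :=
  (dvd_iff.1 dvd_rfl).1

theorem prod_Ico_dvd_gcd {j : ℕ} (hj : 1 ≤ j) (r : ℕ) :
    ∏ m ∈ Finset.Ico j r, paraD g d v m ∣ Int.gcd (v j) (v (g + j)) := by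
  induction r with
  | zero => simp
  | succ r ih =>
    rcases le_or_gt j r with hjr | hrj
    · rw [Finset.prod_Ico_succ_top hjr]
      exact Nat.mul_dvd_of_dvd_div ih
        ((dvd_iff.1 dvd_rfl).2 j (Finset.mem_Icc.2 ⟨hj, hjr⟩))
    · simp [Finset.Ico_eq_empty_of_le (Nat.succ_le_of_lt hrj)]

-- The correction factors `∏ D_m` divide `∏ d_m`, which is coprime to `d k`.
theorem dvd_iff_of_coprime (hcop : ∀ m ∈ Finset.Ico 1 k, Nat.Coprime (d k) (d m)) :
    c ∣ paraD g d v k ↔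
      c ∣ d k ∧ ∀ j ∈ Finset.Icc 1 k, (c : ℤ) ∣ v j ∧ (c : ℤ) ∣ v (g + j) := by
  simp only [← Int.dvd_gcd_iff, dvd_iff]
  refine and_congr_right fun hc => forall₂_congr fun j hj => ?_
  have hj1 := (Finset.mem_Icc.1 hj).1
  have hprod := prod_Ico_dvd_gcd (g := g) (d := d) (v := v) hj1 k
  constructor
  · exact fun h => h.trans (Nat.div_dvd_of_dvd hprod)
  · intro h
    have hcop' : Nat.Coprime c (∏ m ∈ Finset.Ico j k, paraD g d v m) := by
      refine Nat.Coprime.prod_right fun m hm => ?_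
      obtain ⟨hjm, hmk⟩ := Finset.mem_Ico.1 hm
      exact ((hcop m (Finset.mem_Ico.2 ⟨hj1.trans hjm, hmk⟩)).coprime_dvd_left hc).coprime_dvd_right
        dvd_d
    rw [← Nat.div_mul_cancel hprod] at h
    exact hcop'.dvd_of_dvd_mul_right h

theorem gcd_dvd_gcd_of_mulVec {ι : Type*} [Fintype ι]
    (hcop : ∀ m ∈ Finset.Ico 1 k, Nat.Coprime (d k) (d m))
    (w w' : ι → ℕ → ℤ) (M : Matrix ι ι ℤ) (hM : ∀ j, (fun i => w' i j) = M *ᵥ fun l => w l j) :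
    Finset.univ.gcd (fun l => paraD g d (w l) k) ∣
      Finset.univ.gcd (fun i => paraD g d (w' i) k) := by
  refine Finset.dvd_gcd fun i _ => ?_
  set G := Finset.univ.gcd (fun l => paraD g d (w l) k)
  have hG (l : ι) := (dvd_iff_of_coprime hcop).1 (Finset.gcd_dvd (Finset.mem_univ l) : G ∣ _)
  have hcomb (j : ℕ) (h : ∀ l, (G : ℤ) ∣ w l j) : (G : ℤ) ∣ w' i j := by
    rw [congrFun (hM j) i]
    exact Finset.dvd_sum fun l _ => dvd_mul_of_dvd_right (h l) _
  refine (dvd_iff_of_coprime hcop).2 ⟨(hG i).1, fun j hj => ?_⟩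
  exact ⟨hcomb j fun l => ((hG l).2 j hj).1, hcomb (g + j) fun l => ((hG l).2 j hj).2⟩

end paraD

theorem gcd_paraD_unimodular_general (g : ℕ) (d : ℕ → ℕ)
    (hcop : ∀ i j, 1 ≤ i → i ≤ g - 1 → 1 ≤ j → j ≤ g - 1 → i ≠ j →
      Nat.gcd (d i) (d j) = 1)
    (n : ℕ) (v : Fin n → (ℕ → ℤ)) (A : Matrix (Fin n) (Fin n) ℤ)
    (hA : A.det = 1 ∨ A.det = -1)
    (u : Fin n → (ℕ → ℤ)) (hu : u = fun i j => ∑ l, A i l * v l j)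
    (k : ℕ) (hk2 : k ≤ g - 1) :
    Finset.univ.gcd (fun i => paraD g d (u i) k) =
      Finset.univ.gcd (fun i => paraD g d (v i) k) := by
  have hcop' : ∀ m ∈ Finset.Ico 1 k, Nat.Coprime (d k) (d m) := fun m hm => by
    obtain ⟨h1m, hmk⟩ := Finset.mem_Ico.1 hm
    exact hcop k m (by omega) hk2 h1m (by omega) (by omega)
  have hdet : IsUnit A.det := by rcases hA with h | h <;> simp [h]
  have hAv (j : ℕ) : (fun i => u i j) = A *ᵥ fun l => v l j := by
    subst hu; rfl
  have hvA (j : ℕ) : (fun l => v l j) = A⁻¹ *ᵥ fun i => u i j := by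
    rw [hAv, Matrix.mulVec_mulVec, Matrix.nonsing_inv_mul A hdet, Matrix.one_mulVec]
  exact Nat.dvd_antisymm (paraD.gcd_dvd_gcd_of_mulVec hcop' u v A⁻¹ hvA)
    (paraD.gcd_dvd_gcd_of_mulVec hcop' v u A hAv)

/-- For a coprime polarisation type, the gcd of the divisors `D_k` of a family
of vectors is invariant under a unimodular change of basis `uⁱ = Σ_l a_{il} v^l`. -/
theorem gcd_paraD_unimodular (g : ℕ) (hg : 1 ≤ g) (d : ℕ → ℕ) (hd : ∀ n, 0 < d n)
    (hcop : ∀ i j, 1 ≤ i → i ≤ g - 1 → 1 ≤ j → j ≤ g - 1 → i ≠ j →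
      Nat.gcd (d i) (d j) = 1)
    (n : ℕ) (v : Fin n → (ℕ → ℤ)) (A : Matrix (Fin n) (Fin n) ℤ)
    (hA : A.det = 1 ∨ A.det = -1)
    (u : Fin n → (ℕ → ℤ)) (hu : u = fun i j => ∑ l, A i l * v l j)
    (k : ℕ) (hk1 : 1 ≤ k) (hk2 : k ≤ g - 1) :
    Finset.univ.gcd (fun i => paraD g d (u i) k) =
      Finset.univ.gcd (fun i => paraD g d (v i) k) :=
  gcd_paraD_unimodular_general g d hcop n v A hA u hu k hk2
end
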